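/- arXiv:1407.1278 — 9 statements merged into one kernel-verified Lean document; each statement's English description precedes it below -/
import Mathlib

section
/- For a contraction T on a Hilbert space H, the kernel of A_T - I equals {x ∈ H : lim_{n→∞} ‖T^n x‖ = ‖x‖}, and this is the largest subspace invariant under T on which T acts isometrically. -/
open Filter Topology ContinuousLinearMap

/-- For a contraction `T`, `ker (A_T - I)` equals `{x : ‖T^n x‖ → ‖x‖}`, and it is the
largest invariant subspace of `T` on which `T` acts isometrically. -/
theorem ker_asymptotic_limit_sub_one {H : Type*} [NormedAddCommGroup H]
    [InnerProductSpace ℂ H] [CompleteSpace H] (T : H →L[ℂ] H) (hT : ‖T‖ ≤ 1)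
    (A : H →L[ℂ] H)
    (hA : ∀ x : H, Tendsto (fun n : ℕ => (adjoint (T ^ n) ∘L T ^ n) x) atTop (𝓝 (A x))) :
    (∀ x : H, x ∈ LinearMap.ker ((A - 1 : H →L[ℂ] H) : H →ₗ[ℂ] H) ↔
        Tendsto (fun n : ℕ => ‖(T ^ n) x‖) atTop (𝓝 ‖x‖)) ∧
    (∀ x ∈ LinearMap.ker ((A - 1 : H →L[ℂ] H) : H →ₗ[ℂ] H), T x ∈ LinearMap.ker ((A - 1 : H →L[ℂ] H) : H →ₗ[ℂ] H)) ∧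
    (∀ x ∈ LinearMap.ker ((A - 1 : H →L[ℂ] H) : H →ₗ[ℂ] H), ‖T x‖ = ‖x‖) ∧
    (∀ X : Submodule ℂ H, (∀ x ∈ X, T x ∈ X) → (∀ x ∈ X, ‖T x‖ = ‖x‖) →
      X ≤ LinearMap.ker ((A - 1 : H →L[ℂ] H) : H →ₗ[ℂ] H)) := by
  -- basic facts
  have hpow : ∀ n : ℕ, ‖T ^ n‖ ≤ 1 := by
    intro n
    induction n with
    | zero =>
      rw [pow_zero]
      simpa [ContinuousLinearMap.one_def] using ContinuousLinearMap.norm_id_le (E := H)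
    | succ n ih =>
      calc ‖T ^ (n + 1)‖ = ‖T ^ n * T‖ := by rw [pow_succ]
        _ ≤ ‖T ^ n‖ * ‖T‖ := norm_mul_le _ _
        _ ≤ 1 * 1 := mul_le_mul ih hT (norm_nonneg _) zero_le_one
        _ = 1 := one_mul 1
  have hle : ∀ (n : ℕ) (x : H), ‖(T ^ n) x‖ ≤ ‖x‖ := fun n x => by
    calc ‖(T ^ n) x‖ ≤ ‖T ^ n‖ * ‖x‖ := (T ^ n).le_opNorm x
      _ ≤ 1 * ‖x‖ := by
        exact mul_le_mul_of_nonneg_right (hpow n) (norm_nonneg x)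
      _ = ‖x‖ := one_mul _
  have hanti : ∀ x : H, Antitone fun n : ℕ => ‖(T ^ n) x‖ := by
    intro x
    apply antitone_nat_of_succ_le
    intro n
    have : (T ^ (n + 1)) x = T ((T ^ n) x) := by
      rw [pow_succ']; rfl
    rw [this]
    calc ‖T ((T ^ n) x)‖ ≤ ‖T‖ * ‖(T ^ n) x‖ := T.le_opNorm _
      _ ≤ 1 * ‖(T ^ n) x‖ := mul_le_mul_of_nonneg_right hT (norm_nonneg _)
      _ = ‖(T ^ n) x‖ := one_mul _
  -- the real part of ⟪B_n x, x⟫ is ‖T^n x‖²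
  have hre : ∀ (n : ℕ) (x : H),
      RCLike.re (inner ℂ ((adjoint (T ^ n) ∘L T ^ n) x) x : ℂ) = ‖(T ^ n) x‖ ^ 2 := by
    intro n x
    have : (inner ℂ ((adjoint (T ^ n) ∘L T ^ n) x) x : ℂ) = inner ℂ ((T ^ n) x) ((T ^ n) x) := by
      simp [ContinuousLinearMap.comp_apply, adjoint_inner_left]
    rw [this, inner_self_eq_norm_sq]
  -- ker membership as equation
  have hker : ∀ x : H, x ∈ LinearMap.ker ((A - 1 : H →L[ℂ] H) : H →ₗ[ℂ] H) ↔ A x = x := by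
    intro x
    constructor
    · intro h
      have h' : (A - 1) x = 0 := h
      simpa [ContinuousLinearMap.sub_apply, sub_eq_zero] using h'
    · intro h
      show (A - 1) x = 0
      simp [h]
  -- key iff
  have key : ∀ x : H, x ∈ LinearMap.ker ((A - 1 : H →L[ℂ] H) : H →ₗ[ℂ] H) ↔
      Tendsto (fun n : ℕ => ‖(T ^ n) x‖) atTop (𝓝 ‖x‖) := by
    intro x
    rw [hker]
    constructor
    · intro h
      -- ⟪B n x, x⟫ → ⟪A x, x⟫ = ‖x‖²
      have h1 : Tendsto (fun n : ℕ => RCLike.re (inner ℂ ((adjoint (T ^ n) ∘L T ^ n) x) x : ℂ))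
          atTop (𝓝 (RCLike.re (inner ℂ (A x) x : ℂ))) := by
        exact (RCLike.continuous_re.tendsto _).comp
          ((continuous_inner.tendsto _).comp ((hA x).prodMk_nhds tendsto_const_nhds))
      have h2 : RCLike.re (inner ℂ (A x) x : ℂ) = ‖x‖ ^ 2 := by
        rw [h, inner_self_eq_norm_sq]
      rw [h2] at h1
      simp_rw [hre] at h1
      -- take square roots
      have h3 : Tendsto (fun n : ℕ => Real.sqrt (‖(T ^ n) x‖ ^ 2)) atTop
          (𝓝 (Real.sqrt (‖x‖ ^ 2))) := h1.sqrt
      simpa [Real.sqrt_sq (norm_nonneg _)] using h3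
    · intro h
      -- show A x = x
      have hAle : ‖A x‖ ≤ ‖x‖ := by
        apply le_of_tendsto ((hA x).norm)
        filter_upwards with n
        calc ‖(adjoint (T ^ n) ∘L T ^ n) x‖ = ‖adjoint (T ^ n) ((T ^ n) x)‖ := rfl
          _ ≤ ‖adjoint (T ^ n)‖ * ‖(T ^ n) x‖ := (adjoint (T ^ n)).le_opNorm _
          _ ≤ 1 * ‖x‖ := by
              apply mul_le_mul _ (hle n x) (norm_nonneg _) zero_le_one
              rw [LinearIsometryEquiv.norm_map]; exact hpow n
          _ = ‖x‖ := one_mul _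
      have hsq : Tendsto (fun n : ℕ => ‖(T ^ n) x‖ ^ 2) atTop (𝓝 (‖x‖ ^ 2)) := by
        simpa using h.pow 2
      -- ‖x - B n x‖² = ‖x‖² - 2‖T^n x‖² + ‖B n x‖²
      have hexp : ∀ n : ℕ, ‖x - (adjoint (T ^ n) ∘L T ^ n) x‖ ^ 2
          = ‖x‖ ^ 2 - 2 * ‖(T ^ n) x‖ ^ 2 + ‖(adjoint (T ^ n) ∘L T ^ n) x‖ ^ 2 := by
        intro n
        rw [@norm_sub_sq ℂ, inner_re_symm, hre]
      have hlim1 : Tendsto (fun n : ℕ => ‖x - (adjoint (T ^ n) ∘L T ^ n) x‖ ^ 2) atTop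
          (𝓝 (‖x - A x‖ ^ 2)) := by
        exact ((((hA x).const_sub x).norm).pow 2)
      have hlim2 : Tendsto (fun n : ℕ => ‖x - (adjoint (T ^ n) ∘L T ^ n) x‖ ^ 2) atTop
          (𝓝 (‖x‖ ^ 2 - 2 * ‖x‖ ^ 2 + ‖A x‖ ^ 2)) := by
        simp_rw [hexp]
        exact (tendsto_const_nhds.sub (hsq.const_mul 2)).add (((hA x).norm).pow 2)
      have heq : ‖x - A x‖ ^ 2 = ‖x‖ ^ 2 - 2 * ‖x‖ ^ 2 + ‖A x‖ ^ 2 :=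
        tendsto_nhds_unique hlim1 hlim2
      have hnn : (0:ℝ) ≤ ‖x - A x‖ ^ 2 := sq_nonneg _
      have hA2 : ‖A x‖ ^ 2 ≤ ‖x‖ ^ 2 := by
        exact pow_le_pow_left₀ (norm_nonneg _) hAle 2
      have : ‖x - A x‖ ^ 2 = 0 := by nlinarith
      have : x - A x = 0 := by
        have := pow_eq_zero_iff (n := 2) (by norm_num) |>.mp this
        exact norm_eq_zero.mp this
      have : A x = x := by
        have h' := sub_eq_zero.mp this
        exact h'.symm
      exact this
  refine ⟨key, ?_, ?_, ?_⟩
  -- constancy of the norms on the kernel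
  · intro x hx
    have h := (key x).mp hx
    have hconst : ∀ n : ℕ, ‖(T ^ n) x‖ = ‖x‖ := by
      intro n
      refine le_antisymm (hle n x) ?_
      exact (hanti x).le_of_tendsto h n
    rw [key]
    have : ∀ n : ℕ, ‖(T ^ n) (T x)‖ = ‖T x‖ := by
      intro n
      have e1 : (T ^ n) (T x) = (T ^ (n + 1)) x := by rw [pow_succ]; rfl
      have e2 : T x = (T ^ 1) x := by simp
      rw [e1, hconst (n + 1), e2, hconst 1]
    simp_rw [this]
    exact tendsto_const_nhds
  · intro x hx
    have h := (key x).mp hx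
    have hconst : ∀ n : ℕ, ‖(T ^ n) x‖ = ‖x‖ := by
      intro n
      refine le_antisymm (hle n x) ?_
      exact (hanti x).le_of_tendsto h n
    have : T x = (T ^ 1) x := by simp
    rw [this, hconst 1]
  · intro X hinv hiso x hx
    rw [key]
    have hmem : ∀ n : ℕ, (T ^ n) x ∈ X ∧ ‖(T ^ n) x‖ = ‖x‖ := by
      intro n
      induction n with
      | zero => simp [hx]
      | succ n ih =>
        have e : (T ^ (n + 1)) x = T ((T ^ n) x) := by rw [pow_succ']; rfl
        refine ⟨?_, ?_⟩
        · rw [e]; exact hinv _ ih.1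
        · rw [e, hiso _ ih.1, ih.2]
    simp_rw [fun n => (hmem n).2]
    exact tendsto_const_nhds
end

section
/- If T is a contraction whose asymptotic limit A_T is nonzero, then ‖A_T‖ = 1. -/
open Filter Topology ContinuousLinearMap

/-- If the asymptotic limit `A_T` of a contraction `T` is nonzero, then `‖A_T‖ = 1`. -/
theorem norm_asymptotic_limit_eq_one {H : Type*} [NormedAddCommGroup H]
    [InnerProductSpace ℂ H] [CompleteSpace H] (T : H →L[ℂ] H) (hT : ‖T‖ ≤ 1)
    (A : H →L[ℂ] H)
    (hA : ∀ x : H, Tendsto (fun n : ℕ => (adjoint (T ^ n) ∘L T ^ n) x) atTop (𝓝 (A x)))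
    (hA0 : A ≠ 0) : ‖A‖ = 1 := by
  have hTn : ∀ n : ℕ, ‖T ^ n‖ ≤ 1 := by
    intro n
    cases n with
    | zero => have h1 : ‖(1 : H →L[ℂ] H)‖ ≤ 1 := ContinuousLinearMap.norm_id_le; simpa using h1
    | succ m =>
      exact (norm_pow_le' T m.succ_pos).trans (pow_le_one₀ (norm_nonneg T) hT)
  have hTnx : ∀ (n : ℕ) (x : H), ‖(T ^ n) x‖ ≤ ‖x‖ := fun n x =>
    ((T ^ n).le_opNorm x).trans (mul_le_of_le_one_left (norm_nonneg x) (hTn n))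
  have hadj : ∀ n : ℕ, ‖adjoint (T ^ n)‖ ≤ 1 := by
    intro n
    rw [show ‖adjoint (T ^ n)‖ = ‖T ^ n‖ from (adjoint : (H →L[ℂ] H) ≃ₗᵢ⋆[ℂ] (H →L[ℂ] H)).norm_map _]
    exact hTn n
  -- upper bound
  have hub : ‖A‖ ≤ 1 := by
    refine A.opNorm_le_bound zero_le_one fun x => ?_
    rw [one_mul]
    refine le_of_tendsto ((hA x).norm) (Eventually.of_forall fun n => ?_)
    calc ‖(adjoint (T ^ n) ∘L T ^ n) x‖ ≤ ‖adjoint (T ^ n)‖ * ‖(T ^ n) x‖ :=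
          (adjoint (T ^ n)).le_opNorm _
      _ ≤ 1 * ‖x‖ := by
          exact mul_le_mul (hadj n) (hTnx n x) (norm_nonneg _) zero_le_one
      _ = ‖x‖ := one_mul _
  -- key limit: ‖T^n x‖^2 → re ⟪A x, x⟫
  have hlim : ∀ x : H, Tendsto (fun n : ℕ => ‖(T ^ n) x‖ ^ 2) atTop
      (𝓝 (Complex.re (inner ℂ (A x) x))) := by
    intro x
    have h1 : Tendsto (fun n : ℕ => (inner ℂ ((adjoint (T ^ n) ∘L T ^ n) x) x : ℂ)) atTop
        (𝓝 (inner ℂ (A x) x)) :=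
      (Continuous.inner continuous_id continuous_const).continuousAt.tendsto.comp (hA x)
    have h2 : ∀ n : ℕ, (inner ℂ ((adjoint (T ^ n) ∘L T ^ n) x) x : ℂ) = (‖(T ^ n) x‖ : ℂ) ^ 2 := by
      intro n
      rw [comp_apply, adjoint_inner_left, inner_self_eq_norm_sq_to_K]
      norm_cast
    have h3 := (Complex.continuous_re.continuousAt.tendsto.comp h1)
    have h4 : (Complex.re ∘ fun n : ℕ => (inner ℂ ((adjoint (T ^ n) ∘L T ^ n) x) x : ℂ))
        = fun n : ℕ => ‖(T ^ n) x‖ ^ 2 := by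
      funext n
      show (inner ℂ ((adjoint (T ^ n) ∘L T ^ n) x) x : ℂ).re = _
      rw [h2]
      simp [← Complex.ofReal_pow]
    rwa [h4] at h3
  -- pick x with A x ≠ 0
  obtain ⟨x, hx⟩ : ∃ x, A x ≠ 0 := by
    by_contra h
    push_neg at h
    exact hA0 (ContinuousLinearMap.ext fun x => by simp [h x])
  set r : ℝ := Complex.re (inner ℂ (A x) x) with hr
  have hr0 : 0 < r := by
    rcases lt_or_eq_of_le (le_of_tendsto_of_tendsto' tendsto_const_nhds (hlim x)
      (fun n => sq_nonneg _)) with h | h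
    · exact h
    · exfalso
      apply hx
      have hn : Tendsto (fun n : ℕ => ‖(T ^ n) x‖) atTop (𝓝 0) := by
        have := (hlim x)
        rw [← h] at this
        have hsq : Tendsto (fun n : ℕ => Real.sqrt (‖(T ^ n) x‖ ^ 2)) atTop (𝓝 (Real.sqrt 0)) :=
          (Real.continuous_sqrt.continuousAt.tendsto.comp this)
        simpa [Real.sqrt_sq (norm_nonneg _)] using hsq
      have hAx : Tendsto (fun n : ℕ => ‖(adjoint (T ^ n) ∘L T ^ n) x‖) atTop (𝓝 ‖A x‖) :=
        (hA x).norm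
      have hle : ∀ n : ℕ, ‖(adjoint (T ^ n) ∘L T ^ n) x‖ ≤ ‖(T ^ n) x‖ := by
        intro n
        calc ‖(adjoint (T ^ n) ∘L T ^ n) x‖ ≤ ‖adjoint (T ^ n)‖ * ‖(T ^ n) x‖ :=
              (adjoint (T ^ n)).le_opNorm _
          _ ≤ 1 * ‖(T ^ n) x‖ := mul_le_mul_of_nonneg_right (hadj n) (norm_nonneg _)
          _ = ‖(T ^ n) x‖ := one_mul _
      have : ‖A x‖ ≤ 0 := le_of_tendsto_of_tendsto' hAx hn hle
      simpa [norm_le_zero_iff] using this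
  -- re ⟪A (T^k x), T^k x⟫ = r
  have hshift : ∀ k : ℕ, Complex.re (inner ℂ (A ((T ^ k) x)) ((T ^ k) x)) = r := by
    intro k
    have h1 : Tendsto (fun m : ℕ => ‖(T ^ m) ((T ^ k) x)‖ ^ 2) atTop
        (𝓝 (Complex.re (inner ℂ (A ((T ^ k) x)) ((T ^ k) x)))) := hlim ((T ^ k) x)
    have h2 : ∀ m : ℕ, (T ^ m) ((T ^ k) x) = (T ^ (m + k)) x := by
      intro m; rw [pow_add, ContinuousLinearMap.mul_apply]
    have h3 : Tendsto (fun m : ℕ => ‖(T ^ (m + k)) x‖ ^ 2) atTop (𝓝 r) :=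
      (hlim x).comp (tendsto_add_atTop_nat k)
    rw [show (fun m : ℕ => ‖(T ^ m) ((T ^ k) x)‖ ^ 2) = fun m : ℕ => ‖(T ^ (m + k)) x‖ ^ 2
      from funext fun m => by rw [h2]] at h1
    exact tendsto_nhds_unique h1 h3
  -- r ≤ ‖A‖ * ‖T^k x‖^2, take limit
  have hkey : ∀ k : ℕ, r ≤ ‖A‖ * ‖(T ^ k) x‖ ^ 2 := by
    intro k
    rw [← hshift k]
    calc Complex.re (inner ℂ (A ((T ^ k) x)) ((T ^ k) x))
        ≤ ‖(inner ℂ (A ((T ^ k) x)) ((T ^ k) x) : ℂ)‖ := Complex.re_le_norm _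
      _ ≤ ‖A ((T ^ k) x)‖ * ‖(T ^ k) x‖ := norm_inner_le_norm _ _
      _ ≤ (‖A‖ * ‖(T ^ k) x‖) * ‖(T ^ k) x‖ :=
          mul_le_mul_of_nonneg_right (A.le_opNorm _) (norm_nonneg _)
      _ = ‖A‖ * ‖(T ^ k) x‖ ^ 2 := by ring
  have hlimk : Tendsto (fun k : ℕ => ‖A‖ * ‖(T ^ k) x‖ ^ 2) atTop (𝓝 (‖A‖ * r)) :=
    (hlim x).const_mul ‖A‖
  have hle : r ≤ ‖A‖ * r := le_of_tendsto_of_tendsto' tendsto_const_nhds hlimk hkey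
  have hlb : 1 ≤ ‖A‖ := by
    nlinarith
  linarith
end

section
/- If T is a contraction and v a unit vector with lim_{n→∞} ‖T^n v‖² = δ > 0, then ‖A_T^{1/2} T^k v‖ = δ^{1/2} for every k ∈ ℕ, and consequently lim_{k→∞} ‖A_T^{1/2} T^k v‖ / ‖T^k v‖ = 1. -/
open Filter Topology ContinuousLinearMap

/-- If `T` is a contraction, `v` a unit vector with `‖T^n v‖² → δ > 0`, and `B = A_T^{1/2}`
is the positive square root of the asymptotic limit, then `‖B (T^k v)‖ = δ^{1/2}` for all
`k`, and `‖B (T^k v)‖ / ‖T^k v‖ → 1`. -/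
theorem sqrt_asymptotic_limit_on_orbit {H : Type*} [NormedAddCommGroup H]
    [InnerProductSpace ℂ H] [CompleteSpace H] (T : H →L[ℂ] H) (hT : ‖T‖ ≤ 1)
    (A B : H →L[ℂ] H)
    (hA : ∀ x : H, Tendsto (fun n : ℕ => (adjoint (T ^ n) ∘L T ^ n) x) atTop (𝓝 (A x)))
    (hB : B.IsPositive) (hB2 : B ∘L B = A)
    (v : H) (hv : ‖v‖ = 1) (δ : ℝ) (hδ : 0 < δ)
    (hlim : Tendsto (fun n : ℕ => ‖(T ^ n) v‖ ^ 2) atTop (𝓝 δ)) :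
    (∀ k : ℕ, ‖B ((T ^ k) v)‖ = Real.sqrt δ) ∧
    Tendsto (fun k : ℕ => ‖B ((T ^ k) v)‖ / ‖(T ^ k) v‖) atTop (𝓝 1) := by
  have hBsa : IsSelfAdjoint B := hB.isSelfAdjoint
  have key : ∀ k : ℕ, ‖B ((T ^ k) v)‖ = Real.sqrt δ := by
    intro k
    set x := (T ^ k) v with hx
    -- limit of ‖T^n x‖² is δ
    have h1 : Tendsto (fun n : ℕ => ‖(T ^ n) x‖ ^ 2) atTop (𝓝 δ) := by
      have h := hlim.comp (tendsto_add_atTop_nat k)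
      convert h using 2 with n
      simp only [Function.comp, hx, ← ContinuousLinearMap.comp_apply, ← pow_add]
      rw [pow_add]
      rfl
    -- limit of ‖T^n x‖² is re ⟪A x, x⟫
    have h2 : Tendsto (fun n : ℕ => ‖(T ^ n) x‖ ^ 2) atTop
        (𝓝 (RCLike.re (inner ℂ (A x) x : ℂ))) := by
      have hinner : Tendsto (fun n : ℕ => (inner ℂ ((adjoint (T ^ n) ∘L (T ^ n)) x) x : ℂ))
          atTop (𝓝 (inner ℂ (A x) x)) := (hA x).inner tendsto_const_nhds
      have := (RCLike.continuous_re.tendsto _).comp hinner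
      convert this using 2 with n
      simp only [Function.comp, ContinuousLinearMap.comp_apply, adjoint_inner_left]
      rw [← @inner_self_eq_norm_sq ℂ]
    have heq : RCLike.re (inner ℂ (A x) x : ℂ) = δ := tendsto_nhds_unique h2 h1
    have hBsq : ‖B x‖ ^ 2 = δ := by
      have : (inner ℂ (B x) (B x) : ℂ) = inner ℂ (A x) x := by
        rw [← hB2, ContinuousLinearMap.comp_apply]
        calc (inner ℂ (B x) (B x) : ℂ) = inner ℂ (B x) ((adjoint B) x) := by rw [hBsa.adjoint_eq]
          _ = inner ℂ (B (B x)) x := by rw [adjoint_inner_right]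
      rw [← @inner_self_eq_norm_sq ℂ, this, heq]
    rw [← hBsq, Real.sqrt_sq (norm_nonneg _)]
  refine ⟨key, ?_⟩
  have hnorm : Tendsto (fun k : ℕ => ‖(T ^ k) v‖) atTop (𝓝 (Real.sqrt δ)) := by
    have := (Real.continuous_sqrt.tendsto δ).comp hlim
    convert this using 2 with k
    simp [Function.comp, Real.sqrt_sq (norm_nonneg _)]
  have hs : Real.sqrt δ ≠ 0 := by positivity
  have := Tendsto.div (tendsto_const_nhds (x := Real.sqrt δ)) hnorm hs
  rw [div_self hs] at this
  refine this.congr fun k => ?_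
  rw [key k]; rfl
end

section
/- Let T be a contraction whose asymptotic limit A is nonzero and such that 1 is an isolated point of σ(A) with ker(A - I) finite-dimensional. Then ker(A - I) reduces T, T restricted to ker(A - I) is unitary, H decomposes as the orthogonal sum of the stable subspace H_0(T) and ker(A - I), and A is the orthogonal projection onto ker(A - I). -/
open Filter Topology ContinuousLinearMap
open scoped InnerProductSpace

set_option maxHeartbeats 1600000

section AsymptoticAux

variable {H : Type*} [NormedAddCommGroup H] [InnerProductSpace ℂ H] [CompleteSpace H]

private lemma aux_cs {P : H →L[ℂ] H} (hP : IsSelfAdjoint P)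
    (hpos : ∀ z : H, 0 ≤ (⟪P z, z⟫_ℂ).re) (x : H) :
    ‖P x‖ ^ 2 ≤ ‖P‖ * (⟪P x, x⟫_ℂ).re := by
  rcases eq_or_ne (P x) 0 with h0 | h0
  · simpa [h0] using mul_nonneg (norm_nonneg P) (hpos x)
  have hP0 : P ≠ 0 := fun h => h0 (by simp [h])
  have hPn : 0 < ‖P‖ := norm_pos_iff.mpr hP0
  set c : ℝ := ‖P‖⁻¹ with hc
  have hsa : ∀ u v : H, ⟪P u, v⟫_ℂ = ⟪u, P v⟫_ℂ := fun u v => by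
    conv_lhs => rw [← hP.adjoint_eq]
    exact adjoint_inner_left P v u
  have key : ⟪P (x - (c:ℂ) • P x), x - (c:ℂ) • P x⟫_ℂ
      = ⟪P x, x⟫_ℂ - (c:ℂ) * ⟪P x, P x⟫_ℂ - (c:ℂ) * ⟪P (P x), x⟫_ℂ
        + (c:ℂ)^2 * ⟪P (P x), P x⟫_ℂ := by
    simp only [map_sub, map_smul, inner_sub_left, inner_sub_right,
      inner_smul_left, inner_smul_right, Complex.conj_ofReal]
    ring
  have h1 : ⟪P (P x), x⟫_ℂ = ⟪P x, P x⟫_ℂ := hsa (P x) x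
  have h2 : (⟪P x, P x⟫_ℂ).re = ‖P x‖ ^ 2 := by
    rw [inner_self_eq_norm_sq_to_K]; simp [← Complex.ofReal_pow]
  have h3 : (⟪P (P x), P x⟫_ℂ).re ≤ ‖P‖ * ‖P x‖ ^ 2 := by
    calc (⟪P (P x), P x⟫_ℂ).re ≤ ‖⟪P (P x), P x⟫_ℂ‖ := Complex.re_le_norm _
      _ ≤ ‖P (P x)‖ * ‖P x‖ := norm_inner_le_norm _ _
      _ ≤ (‖P‖ * ‖P x‖) * ‖P x‖ := by
          gcongr
          exact P.le_opNorm (P x)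
      _ = ‖P‖ * ‖P x‖ ^ 2 := by ring
  have h := hpos (x - (c:ℂ) • P x)
  rw [key] at h
  rw [h1] at h
  simp only [← Complex.ofReal_pow, Complex.sub_re, Complex.add_re, Complex.mul_re,
    Complex.ofReal_re, Complex.ofReal_im, zero_mul, sub_zero] at h
  rw [h2] at h
  -- h : 0 ≤ re⟪Px,x⟫ - c*‖Px‖² - c*‖Px‖² + c²*re⟪P(Px),Px⟫
  have hb : c^2 * (⟪P (P x), P x⟫_ℂ).re ≤ c * ‖P x‖ ^ 2 := by
    have := h3
    calc c^2 * (⟪P (P x), P x⟫_ℂ).re ≤ c^2 * (‖P‖ * ‖P x‖ ^ 2) := by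
          gcongr
      _ = c * ‖P x‖ ^ 2 := by
          field_simp [hc]
          rw [hc, sq, mul_assoc, inv_mul_cancel₀ hPn.ne', mul_one]
  have h4 : c * ‖P x‖ ^ 2 ≤ (⟪P x, x⟫_ℂ).re := by nlinarith
  calc ‖P x‖ ^ 2 = ‖P‖ * (c * ‖P x‖ ^ 2) := by field_simp [hc]; rw [hc, mul_inv_cancel₀ hPn.ne']
    _ ≤ ‖P‖ * (⟪P x, x⟫_ℂ).re := by gcongr

private lemma aux_gap {B : H →L[ℂ] H} (hB : IsSelfAdjoint B) {ε : ℝ} (hε : 0 < ε)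
    (hspec : ∀ t : ℝ, t ∈ spectrum ℝ B → t ≠ 0 → ε ≤ |t|) :
    ∃ c : ℝ, ∀ y : H, (∀ e : H, B e = 0 → ⟪y, e⟫_ℂ = 0) → ‖y‖ ≤ c * ‖B y‖ := by
  set S := spectrum ℝ B with hS
  set g : ℝ → ℝ := fun t => if t = 0 then 0 else t⁻¹ with hg
  set q : ℝ → ℝ := fun t => if t = 0 then 1 else 0 with hq
  have hball : ∀ s ∈ Metric.ball (0:ℝ) ε ∩ S, s = 0 := by
    intro s hs
    by_contra hs0
    have := hspec s hs.2 hs0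
    have : |s| < ε := by simpa [Real.dist_eq] using hs.1
    linarith [hspec s hs.2 hs0]
  have hmem : S ∩ Metric.ball (0:ℝ) ε ∈ 𝓝[S] (0:ℝ) :=
    inter_mem_nhdsWithin S (Metric.ball_mem_nhds 0 hε)
  have hgS : ContinuousOn g S := by
    intro t ht
    rcases eq_or_ne t 0 with rfl | ht0
    · have hev : g =ᶠ[𝓝[S] (0:ℝ)] fun _ => (0:ℝ) := by
        filter_upwards [hmem] with s hs
        have : s = 0 := hball s ⟨hs.2, hs.1⟩
        simp [hg, this]
      exact (continuousWithinAt_const (b := (0:ℝ))).congr_of_eventuallyEq hev (by simp [hg])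
    · have hev : g =ᶠ[𝓝 t] fun s => s⁻¹ := by
        filter_upwards [isOpen_compl_singleton.mem_nhds (by simpa using ht0 :
          t ∈ ({0}ᶜ : Set ℝ))] with s hs
        simp [hg, Set.mem_compl_iff, Set.mem_singleton_iff] at hs ⊢
        simp [hs]
      exact ((continuousAt_inv₀ ht0).congr hev.symm).continuousWithinAt
  have hqS : ContinuousOn q S := by
    intro t ht
    rcases eq_or_ne t 0 with rfl | ht0
    · have hev : q =ᶠ[𝓝[S] (0:ℝ)] fun _ => (1:ℝ) := by
        filter_upwards [hmem] with s hs
        have : s = 0 := hball s ⟨hs.2, hs.1⟩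
        simp [hq, this]
      exact (continuousWithinAt_const (b := (1:ℝ))).congr_of_eventuallyEq hev (by simp [hq])
    · have hev : q =ᶠ[𝓝 t] fun _ => (0:ℝ) := by
        filter_upwards [isOpen_compl_singleton.mem_nhds (by simpa using ht0 :
          t ∈ ({0}ᶜ : Set ℝ))] with s hs
        simp [Set.mem_compl_iff, Set.mem_singleton_iff] at hs
        simp [hq, hs]
      exact hev.continuousAt.continuousWithinAt
  set C := cfc g B with hC
  set Q := cfc q B with hQdef
  have hCBQ : C * B + Q = 1 := by
    have hmul := cfc_mul g id B hgS continuousOn_id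
    rw [cfc_id ℝ B hB] at hmul
    have h1 : C * B = cfc (fun t => g t * id t) B := by rw [hC, ← hmul]
    rw [h1, hQdef, ← cfc_add B (fun t => g t * id t) q (hgS.mul continuousOn_id) hqS]
    have heq : (fun t => g t * id t + q t) = fun _ : ℝ => (1:ℝ) := by
      funext t
      rcases eq_or_ne t 0 with rfl | ht0
      · simp [hg, hq]
      · simp [hg, hq, ht0, inv_mul_cancel₀]
    rw [heq, cfc_const_one ℝ B hB]
  have hBQ : B * Q = 0 := by
    have hmul := cfc_mul id q B continuousOn_id hqS
    rw [cfc_id ℝ B hB] at hmul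
    have h1 : B * Q = cfc (fun t => id t * q t) B := by rw [hQdef, ← hmul]
    have heq : (fun t : ℝ => id t * q t) = fun _ : ℝ => (0:ℝ) := by
      funext t
      rcases eq_or_ne t 0 with rfl | ht0
      · simp [hq]
      · simp [hq, ht0]
    rw [h1, heq]
    simpa using cfc_zero ℝ B
  have hQsa : IsSelfAdjoint Q := cfc_predicate q B
  have hQQ : Q * Q = Q := by
    rw [hQdef, ← cfc_mul q q B hqS hqS]
    congr 1
    funext t
    rcases eq_or_ne t 0 with rfl | ht0
    · simp [hq]
    · simp [hq, ht0]
  refine ⟨‖C‖, fun y hy => ?_⟩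
  have hQy0 : B (Q y) = 0 := by
    have : (B * Q) y = (0 : H →L[ℂ] H) y := by rw [hBQ]
    simpa [ContinuousLinearMap.mul_apply] using this
  have h1 : ⟪y, Q y⟫_ℂ = 0 := hy _ hQy0
  have hQy : Q y = 0 := by
    rw [← inner_self_eq_zero (𝕜 := ℂ)]
    calc ⟪Q y, Q y⟫_ℂ = ⟪(adjoint Q) y, Q y⟫_ℂ := by rw [hQsa.adjoint_eq]
      _ = ⟪y, Q (Q y)⟫_ℂ := adjoint_inner_left Q (Q y) y
      _ = ⟪y, (Q * Q) y⟫_ℂ := by rw [ContinuousLinearMap.mul_apply]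
      _ = ⟪y, Q y⟫_ℂ := by rw [hQQ]
      _ = 0 := h1
  have hyC : C (B y) = y := by
    have h2 : (C * B + Q) y = (1 : H →L[ℂ] H) y := by rw [hCBQ]
    simpa [ContinuousLinearMap.add_apply, ContinuousLinearMap.mul_apply, hQy,
      ContinuousLinearMap.one_apply] using h2
  calc ‖y‖ = ‖C (B y)‖ := by rw [hyC]
    _ ≤ ‖C‖ * ‖B y‖ := C.le_opNorm (B y)

end AsymptoticAux

/-- If `T` is a contraction whose asymptotic limit `A` is nonzero, `1` is an isolated point
of the spectrum of `A`, and `ker (A - I)` is finite-dimensional, then `ker (A - I)` reduces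
`T`, `T` restricted to `ker (A - I)` is unitary, `H` is the orthogonal sum of the stable
subspace `H₀(T)` and `ker (A - I)`, and `A` is the orthogonal projection onto `ker (A - I)`. -/
theorem asymptotic_limit_is_finite_rank_projection {H : Type*} [NormedAddCommGroup H]
    [InnerProductSpace ℂ H] [CompleteSpace H] (T : H →L[ℂ] H) (hT : ‖T‖ ≤ 1)
    (A : H →L[ℂ] H)
    (hA : ∀ x : H, Tendsto (fun n : ℕ => (adjoint (T ^ n) ∘L T ^ n) x) atTop (𝓝 (A x)))
    (hA0 : A ≠ 0)
    (h1spec : (1 : ℂ) ∈ spectrum ℂ A)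
    (hisol : ∃ ε : ℝ, 0 < ε ∧ ∀ z ∈ spectrum ℂ A, z ≠ 1 → ε ≤ ‖z - 1‖)
    (hfin : FiniteDimensional ℂ (LinearMap.ker ((A - 1 : H →L[ℂ] H) : H →ₗ[ℂ] H))) :
    (∀ x ∈ LinearMap.ker ((A - 1 : H →L[ℂ] H) : H →ₗ[ℂ] H), T x ∈ LinearMap.ker ((A - 1 : H →L[ℂ] H) : H →ₗ[ℂ] H)) ∧
    (∀ x ∈ LinearMap.ker ((A - 1 : H →L[ℂ] H) : H →ₗ[ℂ] H), adjoint T x ∈ LinearMap.ker ((A - 1 : H →L[ℂ] H) : H →ₗ[ℂ] H)) ∧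
    (∀ x ∈ LinearMap.ker ((A - 1 : H →L[ℂ] H) : H →ₗ[ℂ] H), ‖T x‖ = ‖x‖) ∧
    (∀ y ∈ LinearMap.ker ((A - 1 : H →L[ℂ] H) : H →ₗ[ℂ] H), ∃ x ∈ LinearMap.ker ((A - 1 : H →L[ℂ] H) : H →ₗ[ℂ] H), T x = y) ∧
    (∀ x : H, Tendsto (fun n : ℕ => ‖(T ^ n) x‖) atTop (𝓝 0) →
      ∀ y ∈ LinearMap.ker ((A - 1 : H →L[ℂ] H) : H →ₗ[ℂ] H), ⟪x, y⟫_ℂ = 0) ∧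
    (∀ z : H, ∃ x y : H, Tendsto (fun n : ℕ => ‖(T ^ n) x‖) atTop (𝓝 0) ∧
      y ∈ LinearMap.ker ((A - 1 : H →L[ℂ] H) : H →ₗ[ℂ] H) ∧ z = x + y) ∧
    IsSelfAdjoint A ∧ IsIdempotentElem A ∧ LinearMap.range (A : H →ₗ[ℂ] H) = LinearMap.ker ((A - 1 : H →L[ℂ] H) : H →ₗ[ℂ] H) := by
  obtain ⟨ε, hε, hiso⟩ := hisol
  set E := LinearMap.ker ((A - 1 : H →L[ℂ] H) : H →ₗ[ℂ] H) with hE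
  -- basic norm bound
  have hTn : ∀ (n : ℕ) (x : H), ‖(T ^ n) x‖ ≤ ‖x‖ := by
    intro n x
    rcases Nat.eq_zero_or_pos n with rfl | hn
    · simp
    calc ‖(T ^ n) x‖ ≤ ‖T ^ n‖ * ‖x‖ := le_opNorm _ x
      _ ≤ 1 * ‖x‖ := by
          gcongr
          calc ‖T ^ n‖ ≤ ‖T‖ ^ n := norm_pow_le' T hn
            _ ≤ 1 := pow_le_one₀ (norm_nonneg T) hT
      _ = ‖x‖ := one_mul _
  have hT1 : ∀ x : H, ‖T x‖ ≤ ‖x‖ := by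
    intro x
    simpa using hTn 1 x
  -- limits of inner products
  have hlim : ∀ x y : H, Tendsto (fun n : ℕ => ⟪(T ^ n) x, (T ^ n) y⟫_ℂ) atTop (𝓝 ⟪A x, y⟫_ℂ) := by
    intro x y
    have h := Filter.Tendsto.inner (𝕜 := ℂ) (hA x) (tendsto_const_nhds (x := y))
    refine h.congr fun n => ?_
    simp only [ContinuousLinearMap.comp_apply]
    exact adjoint_inner_left (T ^ n) y ((T ^ n) x)
  have hsym : ∀ x y : H, ⟪A x, y⟫_ℂ = ⟪x, A y⟫_ℂ := by
    intro x y
    have h2' := (continuous_star.tendsto (⟪A y, x⟫_ℂ)).comp (hlim y x)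
    have h2 : Tendsto (fun n : ℕ => ⟪(T ^ n) x, (T ^ n) y⟫_ℂ) atTop (𝓝 ⟪x, A y⟫_ℂ) := by
      simpa only [Function.comp_def, Complex.star_def, inner_conj_symm] using h2'
    exact tendsto_nhds_unique (hlim x y) h2
  have hsa : IsSelfAdjoint A :=
    ContinuousLinearMap.isSelfAdjoint_iff_isSymmetric.mpr fun x y => hsym x y
  have hlimnorm : ∀ x : H, Tendsto (fun n : ℕ => ‖(T ^ n) x‖ ^ 2) atTop (𝓝 ((⟪A x, x⟫_ℂ).re)) := by
    intro x
    have h := (Complex.continuous_re.tendsto _).comp (hlim x x)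
    refine h.congr fun n => ?_
    simp only [Function.comp_apply]
    rw [inner_self_eq_norm_sq_to_K]
    simp [← Complex.ofReal_pow]
  have hApos : ∀ x : H, 0 ≤ (⟪A x, x⟫_ℂ).re := fun x =>
    ge_of_tendsto' (hlimnorm x) fun n => sq_nonneg _
  have hAle : ∀ x : H, (⟪A x, x⟫_ℂ).re ≤ ‖x‖ ^ 2 := fun x =>
    le_of_tendsto' (hlimnorm x) fun n => pow_le_pow_left₀ (norm_nonneg _) (hTn n x) 2
  have hPsa : IsSelfAdjoint (1 - A : H →L[ℂ] H) := IsSelfAdjoint.sub (IsSelfAdjoint.one _) hsa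
  have hinner_sub : ∀ z : H, (⟪(1 - A : H →L[ℂ] H) z, z⟫_ℂ).re = ‖z‖ ^ 2 - (⟪A z, z⟫_ℂ).re := by
    intro z
    have h1 : (1 - A : H →L[ℂ] H) z = z - A z := by
      simp [ContinuousLinearMap.sub_apply]
    rw [h1, inner_sub_left, Complex.sub_re, inner_self_eq_norm_sq_to_K]
    simp [← Complex.ofReal_pow]
  have hPpos : ∀ z : H, 0 ≤ (⟪(1 - A : H →L[ℂ] H) z, z⟫_ℂ).re := by
    intro z
    rw [hinner_sub z]
    have := hAle z
    linarith
  have hmemE : ∀ x : H, x ∈ E ↔ A x = x := by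
    intro x
    rw [hE, LinearMap.mem_ker]
    constructor
    · intro h
      have h2 : A x - x = 0 := by simpa [ContinuousLinearMap.sub_apply] using h
      exact sub_eq_zero.mp h2
    · intro h
      simp [ContinuousLinearMap.sub_apply, h]
  have hcrit : ∀ x : H, (⟪A x, x⟫_ℂ).re = ‖x‖ ^ 2 → A x = x := by
    intro x hx
    have h := aux_cs hPsa hPpos x
    have h2 : (⟪(1 - A : H →L[ℂ] H) x, x⟫_ℂ).re = 0 := by rw [hinner_sub x, hx]; ring
    rw [h2, mul_zero] at h
    have h3 : (1 - A : H →L[ℂ] H) x = 0 := by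
      have h4 : ‖(1 - A : H →L[ℂ] H) x‖ ^ 2 = 0 := le_antisymm h (sq_nonneg _)
      have h5 : ‖(1 - A : H →L[ℂ] H) x‖ = 0 := by
        have := sq_nonneg ‖(1 - A : H →L[ℂ] H) x‖
        nlinarith [norm_nonneg ((1 - A : H →L[ℂ] H) x)]
      exact norm_eq_zero.mp h5
    have h6 : x - A x = 0 := by simpa [ContinuousLinearMap.sub_apply] using h3
    have := sub_eq_zero.mp h6
    exact this.symm
  -- T* A T = A
  have hTAT : ∀ x : H, adjoint T (A (T x)) = A x := by
    intro x
    have h1 : Tendsto (fun n : ℕ => (adjoint (T ^ (n + 1)) ∘L T ^ (n + 1)) x) atTop (𝓝 (A x)) :=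
      (hA x).comp (tendsto_add_atTop_nat 1)
    have h2 : Tendsto (fun n : ℕ => adjoint T ((adjoint (T ^ n) ∘L T ^ n) (T x))) atTop
        (𝓝 (adjoint T (A (T x)))) := ((adjoint T).continuous.tendsto _).comp (hA (T x))
    have heq : ∀ n : ℕ, (adjoint (T ^ (n + 1)) ∘L T ^ (n + 1)) x
        = adjoint T ((adjoint (T ^ n) ∘L T ^ n) (T x)) := by
      intro n
      have hp : T ^ (n + 1) = (T ^ n).comp T := by rw [pow_succ]; rfl
      rw [hp]
      rw [ContinuousLinearMap.adjoint_comp]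
      simp [ContinuousLinearMap.comp_apply]
    exact tendsto_nhds_unique (h1.congr heq) h2 |>.symm
  have hreAT : ∀ x : H, ⟪A (T x), T x⟫_ℂ = ⟪A x, x⟫_ℂ := by
    intro x
    have h1 : ⟪adjoint T (A (T x)), x⟫_ℂ = ⟪A (T x), T x⟫_ℂ := adjoint_inner_left T x (A (T x))
    rw [← h1, hTAT x]
  have hreATn : ∀ (n : ℕ) (x : H), ⟪A ((T ^ n) x), (T ^ n) x⟫_ℂ = ⟪A x, x⟫_ℂ := by
    intro n
    induction n with
    | zero => intro x; simp
    | succ n ih =>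
      intro x
      have hp : (T ^ (n + 1)) x = (T ^ n) (T x) := by rw [pow_succ]; rfl
      rw [hp, ih (T x), hreAT x]
  -- invariance of E under T, isometry on E
  have hnormTE : ∀ x : H, A x = x → ‖T x‖ = ‖x‖ ∧ A (T x) = T x := by
    intro x hx
    have hxx : (⟪A x, x⟫_ℂ).re = ‖x‖ ^ 2 := by
      rw [hx, inner_self_eq_norm_sq_to_K]
      simp [← Complex.ofReal_pow]
    have h1 : (⟪A (T x), T x⟫_ℂ).re = ‖x‖ ^ 2 := by rw [hreAT x, hxx]
    have h2 : ‖T x‖ ^ 2 ≤ ‖x‖ ^ 2 := pow_le_pow_left₀ (norm_nonneg _) (hT1 x) 2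
    have h3 : ‖x‖ ^ 2 ≤ ‖T x‖ ^ 2 := by
      have := hAle (T x)
      linarith [h1]
    have h4 : ‖T x‖ ^ 2 = ‖x‖ ^ 2 := le_antisymm h2 h3
    have h5 : ‖T x‖ = ‖x‖ := (pow_left_inj₀ (norm_nonneg _) (norm_nonneg _) two_ne_zero).mp h4
    refine ⟨h5, hcrit (T x) ?_⟩
    rw [h1, h5]
  have hTE : ∀ x ∈ E, T x ∈ E := fun x hx =>
    (hmemE _).mpr (hnormTE x ((hmemE x).mp hx)).2
  have hTnormE : ∀ x ∈ E, ‖T x‖ = ‖x‖ := fun x hx => (hnormTE x ((hmemE x).mp hx)).1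
  -- surjectivity of T on E
  have hsurj : ∀ y ∈ E, ∃ x ∈ E, T x = y := by
    have hres : ∀ x ∈ E, (T : H →ₗ[ℂ] H) x ∈ E := fun x hx => hTE x hx
    set φ : E →ₗ[ℂ] E := LinearMap.restrict (T : H →ₗ[ℂ] H) hres with hφ
    have hinj : Function.Injective φ := by
      intro a b hab
      have h1 : T (a : H) = T (b : H) := congrArg Subtype.val hab
      have h2 : T ((a : H) - (b : H)) = 0 := by rw [map_sub, h1, sub_self]
      have h3 : (a : H) - (b : H) ∈ E := sub_mem a.2 b.2
      have h4 : ‖(a : H) - (b : H)‖ = 0 := by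
        rw [← hTnormE _ h3, h2, norm_zero]
      exact Subtype.ext (by rwa [← sub_eq_zero, ← norm_eq_zero])
    have hsurjφ : Function.Surjective φ := (LinearMap.injective_iff_surjective).mp hinj
    intro y hy
    obtain ⟨x, hx⟩ := hsurjφ ⟨y, hy⟩
    exact ⟨(x : H), x.2, congrArg Subtype.val hx⟩
  -- T* T = 1 on E, T* maps E to E
  have hstT : ∀ x ∈ E, adjoint T (T x) = x := by
    intro x hx
    have hTx : ‖T x‖ = ‖x‖ := hTnormE x hx
    have hre : (⟪adjoint T (T x), x⟫_ℂ).re = ‖x‖ ^ 2 := by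
      have h1 : ⟪adjoint T (T x), x⟫_ℂ = ⟪T x, T x⟫_ℂ := adjoint_inner_left T x (T x)
      rw [h1, inner_self_eq_norm_sq_to_K, hTx]
      simp [← Complex.ofReal_pow]
    have hnle : ‖adjoint T (T x)‖ ≤ ‖x‖ := by
      calc ‖adjoint T (T x)‖ ≤ ‖adjoint T‖ * ‖T x‖ := le_opNorm _ _
        _ ≤ 1 * ‖x‖ := by
            rw [hTx]
            gcongr
            rw [ContinuousLinearMap.adjoint.norm_map T]
            exact hT
        _ = ‖x‖ := one_mul _
    have hexp : ‖adjoint T (T x) - x‖ ^ 2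
        = ‖adjoint T (T x)‖ ^ 2 - 2 * (⟪adjoint T (T x), x⟫_ℂ).re + ‖x‖ ^ 2 := by
      simpa [RCLike.re_to_complex] using norm_sub_sq (𝕜 := ℂ) (adjoint T (T x)) x
    have h0 : ‖adjoint T (T x) - x‖ ^ 2 ≤ 0 := by
      rw [hexp, hre]
      nlinarith [norm_nonneg (adjoint T (T x))]
    have : ‖adjoint T (T x) - x‖ = 0 := by
      nlinarith [norm_nonneg (adjoint T (T x) - x), sq_nonneg ‖adjoint T (T x) - x‖]
    rwa [norm_eq_zero, sub_eq_zero] at this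
  have hTstarE : ∀ x ∈ E, adjoint T x ∈ E := by
    intro x hx
    obtain ⟨u, hu, hTu⟩ := hsurj x hx
    have : adjoint T x = u := by rw [← hTu]; exact hstT u hu
    rw [this]; exact hu
  -- iterated facts on E
  have hTnE : ∀ (n : ℕ), ∀ x ∈ E, (T ^ n) x ∈ E ∧ (adjoint T ^ n) ((T ^ n) x) = x := by
    intro n
    induction n with
    | zero => intro x hx; simpa using hx
    | succ n ih =>
      intro x hx
      have hp : (T ^ (n + 1)) x = (T ^ n) (T x) := by rw [pow_succ]; rfl
      have hTx := hTE x hx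
      obtain ⟨hmem, hid⟩ := ih (T x) hTx
      constructor
      · rw [hp]; exact hmem
      · have hq : ∀ z : H, (adjoint T ^ (n + 1)) z = adjoint T ((adjoint T ^ n) z) := by
          intro z
          rw [pow_succ']; rfl
        rw [hp, hq, hid, hstT x hx]
  have hadjpow : ∀ n : ℕ, adjoint (T ^ n) = adjoint T ^ n := by
    intro n
    rw [← star_eq_adjoint, ← star_eq_adjoint, star_pow]
  -- iterated surjectivity
  have hsurjn : ∀ (n : ℕ), ∀ e ∈ E, ∃ u ∈ E, (T ^ n) u = e := by
    intro n
    induction n with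
    | zero => intro e he; exact ⟨e, he, by simp⟩
    | succ n ih =>
      intro e he
      obtain ⟨u, hu, hTu⟩ := hsurj e he
      obtain ⟨v, hv, hTv⟩ := ih u hu
      refine ⟨v, hv, ?_⟩
      have hp : (T ^ (n + 1)) v = T ((T ^ n) v) := by rw [pow_succ']; rfl
      rw [hp, hTv, hTu]
  -- conclusion 5
  have hperp : ∀ x : H, Tendsto (fun n : ℕ => ‖(T ^ n) x‖) atTop (𝓝 0) →
      ∀ y ∈ E, ⟪x, y⟫_ℂ = 0 := by
    intro x hx y hy
    have hb : ∀ n : ℕ, ‖⟪x, y⟫_ℂ‖ ≤ ‖(T ^ n) x‖ * ‖y‖ := by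
      intro n
      have h1 : ⟪x, y⟫_ℂ = ⟪(T ^ n) x, (T ^ n) y⟫_ℂ := by
        have h2 : ⟪x, adjoint (T ^ n) ((T ^ n) y)⟫_ℂ = ⟪(T ^ n) x, (T ^ n) y⟫_ℂ :=
          adjoint_inner_right (T ^ n) x ((T ^ n) y)
        rw [← h2, hadjpow n, (hTnE n y hy).2]
      rw [h1]
      calc ‖⟪(T ^ n) x, (T ^ n) y⟫_ℂ‖ ≤ ‖(T ^ n) x‖ * ‖(T ^ n) y‖ := norm_inner_le_norm _ _
        _ ≤ ‖(T ^ n) x‖ * ‖y‖ := by gcongr; exact hTn n y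
    have h0 : Tendsto (fun n : ℕ => ‖(T ^ n) x‖ * ‖y‖) atTop (𝓝 0) := by
      simpa using hx.mul_const ‖y‖
    have : ‖⟪x, y⟫_ℂ‖ ≤ 0 := ge_of_tendsto' h0 hb
    simpa using norm_le_zero_iff.mp this
  -- spectral gap application
  have hBsa : IsSelfAdjoint (A - 1 : H →L[ℂ] H) := IsSelfAdjoint.sub hsa (IsSelfAdjoint.one _)
  have hgap : ∃ c : ℝ, ∀ y : H, (∀ e : H, (A - 1) e = 0 → ⟪y, e⟫_ℂ = 0) →
      ‖y‖ ≤ c * ‖(A - 1) y‖ := by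
    apply aux_gap hBsa hε
    intro t ht ht0
    have h1 : ((t : ℂ)) ∈ spectrum ℂ (A - 1) := by
      have h := spectrum.algebraMap_mem ℂ ht
      simpa [Complex.coe_algebraMap] using h
    have h2 : ((t : ℂ) + 1) ∈ spectrum ℂ A := by
      rw [spectrum.mem_iff] at h1 ⊢
      convert h1 using 2
      rw [map_add, map_one]
      abel
    have h3 : (t : ℂ) + 1 ≠ 1 := by
      intro h
      apply ht0
      have h4 : (t : ℂ) = 0 := by linear_combination h
      exact_mod_cast h4
    have h5 := hiso _ h2 h3
    have h6 : ((t : ℂ) + 1) - 1 = (t : ℂ) := by ring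
    rw [h6] at h5
    simpa [Complex.norm_real, Real.norm_eq_abs] using h5
  -- vectors orthogonal to E are stable
  have hlim0 : ∀ x : H, (∀ e ∈ E, ⟪x, e⟫_ℂ = 0) →
      Tendsto (fun n : ℕ => ‖(T ^ n) x‖) atTop (𝓝 0) := by
    intro x hx
    obtain ⟨c, hc⟩ := hgap
    have hp : ∀ (n : ℕ), ∀ e ∈ E, ⟪(T ^ n) x, e⟫_ℂ = 0 := by
      intro n e he
      obtain ⟨u, hu, hTu⟩ := hsurjn n e he
      have h1 : ⟪x, adjoint (T ^ n) ((T ^ n) u)⟫_ℂ = ⟪(T ^ n) x, (T ^ n) u⟫_ℂ :=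
        adjoint_inner_right (T ^ n) x ((T ^ n) u)
      rw [← hTu, ← h1, hadjpow n, (hTnE n u hu).2]
      exact hx u hu
    have hPTn : Tendsto (fun n : ℕ => (⟪(1 - A : H →L[ℂ] H) ((T ^ n) x), (T ^ n) x⟫_ℂ).re)
        atTop (𝓝 0) := by
      have heq : ∀ n : ℕ, (⟪(1 - A : H →L[ℂ] H) ((T ^ n) x), (T ^ n) x⟫_ℂ).re
          = ‖(T ^ n) x‖ ^ 2 - (⟪A x, x⟫_ℂ).re := by
        intro n
        rw [hinner_sub ((T ^ n) x), hreATn n x]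
      have h2 : Tendsto (fun n : ℕ => ‖(T ^ n) x‖ ^ 2 - (⟪A x, x⟫_ℂ).re) atTop (𝓝 0) := by
        have := (hlimnorm x).sub_const ((⟪A x, x⟫_ℂ).re)
        simpa using this
      exact h2.congr fun n => (heq n).symm
    have hBn : Tendsto (fun n : ℕ => ‖(A - 1) ((T ^ n) x)‖) atTop (𝓝 0) := by
      have hnegeq : ∀ z : H, ‖(A - 1) z‖ = ‖(1 - A : H →L[ℂ] H) z‖ := by
        intro z
        have : (A - 1 : H →L[ℂ] H) z = -((1 - A : H →L[ℂ] H) z) := by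
          simp [ContinuousLinearMap.sub_apply]
        rw [this, norm_neg]
      have h2 : Tendsto (fun n : ℕ => ‖(1 - A : H →L[ℂ] H) ((T ^ n) x)‖ ^ 2) atTop (𝓝 0) := by
        apply squeeze_zero (fun n => sq_nonneg _)
          (fun n => aux_cs hPsa hPpos ((T ^ n) x))
        simpa using hPTn.const_mul ‖(1 - A : H →L[ℂ] H)‖
      have h3 := h2.sqrt
      rw [Real.sqrt_zero] at h3
      have h4 : Tendsto (fun n : ℕ => ‖(1 - A : H →L[ℂ] H) ((T ^ n) x)‖) atTop (𝓝 0) :=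
        h3.congr fun n => Real.sqrt_sq (norm_nonneg _)
      exact h4.congr fun n => (hnegeq ((T ^ n) x)).symm
    apply squeeze_zero (fun n => norm_nonneg _)
      (fun n => hc ((T ^ n) x) (fun e he => hp n e he))
    simpa using hBn.const_mul c
  -- decomposition
  haveI : CompleteSpace E := FiniteDimensional.complete ℂ E
  have hdecomp : ∀ z : H, ∃ x y : H, (∀ e ∈ E, ⟪x, e⟫_ℂ = 0) ∧ y ∈ E ∧ z = x + y := by
    intro z
    refine ⟨z - (E.orthogonalProjectionOnto z : H), (E.orthogonalProjectionOnto z : H), ?_,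
      (E.orthogonalProjectionOnto z).2, by abel⟩
    intro e he
    have hxo : z - (E.orthogonalProjectionOnto z : H) ∈ Eᗮ :=
      Submodule.sub_starProjection_mem_orthogonal (K := E) z
    exact (Submodule.mem_orthogonal' E _).mp hxo e he
  have hAperp : ∀ x : H, (∀ e ∈ E, ⟪x, e⟫_ℂ = 0) → A x = 0 := by
    intro x hx
    have h0 := hlim0 x hx
    have h1 : Tendsto (fun n : ℕ => ‖(T ^ n) x‖ ^ 2) atTop (𝓝 0) := by
      have := h0.pow 2
      simpa using this
    have h2 : (⟪A x, x⟫_ℂ).re = 0 := tendsto_nhds_unique (hlimnorm x) h1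
    have h3 := aux_cs hsa hApos x
    rw [h2, mul_zero] at h3
    have h4 : ‖A x‖ = 0 := by
      nlinarith [norm_nonneg (A x), sq_nonneg ‖A x‖]
    exact norm_eq_zero.mp h4
  have hAE : ∀ y ∈ E, A y = y := fun y hy => (hmemE y).mp hy
  have hAz : ∀ z : H, ∀ x y : H, (∀ e ∈ E, ⟪x, e⟫_ℂ = 0) → y ∈ E → z = x + y → A z = y := by
    intro z x y hx hy hz
    rw [hz, map_add, hAperp x hx, hAE y hy, zero_add]
  have hidem : IsIdempotentElem A := by
    rw [IsIdempotentElem]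
    ext z
    obtain ⟨x, y, hx, hy, hz⟩ := hdecomp z
    have h1 : A z = y := hAz z x y hx hy hz
    rw [ContinuousLinearMap.mul_apply, h1]
    exact hAE y hy
  have hrange : LinearMap.range (A : H →ₗ[ℂ] H) = E := by
    apply le_antisymm
    · rintro w ⟨z, rfl⟩
      obtain ⟨x, y, hx, hy, hz⟩ := hdecomp z
      rw [ContinuousLinearMap.coe_coe, hAz z x y hx hy hz]
      exact hy
    · intro y hy
      exact ⟨y, hAE y hy⟩
  refine ⟨hTE, fun x hx => hTstarE x hx, hTnormE, hsurj, hperp, ?_, hsa, hidem, hrange⟩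
  intro z
  obtain ⟨x, y, hx, hy, hz⟩ := hdecomp z
  exact ⟨x, y, hlim0 x hx, hy, hz⟩
end

section
/- If A is a nonzero asymptotic limit of a contraction T and A is not a finite-rank projection, then the essential spectral radius of A equals 1. -/
open Filter Topology ContinuousLinearMap

/-- The essential norm of an operator: the distance to the ideal of compact operators,
i.e. the norm of its image in the Calkin algebra `B(H)/K(H)`. -/
noncomputable def essentialNorm {H : Type*} [NormedAddCommGroup H]
    [InnerProductSpace ℂ H] [CompleteSpace H] (A : H →L[ℂ] H) : ℝ :=
  sInf {c : ℝ | ∃ K : H →L[ℂ] H, IsCompactOperator K ∧ c = ‖A - K‖}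

/-- The essential spectral radius: the spectral radius of the image of `A` in the Calkin
algebra, computed by the Gelfand formula `inf_n ‖A^n‖_e^{1/n}`. -/
noncomputable def essentialSpectralRadius {H : Type*} [NormedAddCommGroup H]
    [InnerProductSpace ℂ H] [CompleteSpace H] (A : H →L[ℂ] H) : ℝ :=
  ⨅ n : ℕ+, essentialNorm (A ^ (n : ℕ)) ^ (((n : ℕ) : ℝ)⁻¹)

noncomputable section
namespace EssAux
set_option linter.unusedSectionVars false
set_option maxHeartbeats 1000000


variable {H : Type*} [NormedAddCommGroup H] [InnerProductSpace ℂ H] [CompleteSpace H]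

local notation "⟪" x ", " y "⟫" => @inner ℂ _ _ x y

/-- A symmetric positive operator kills any vector where its quadratic form vanishes. -/
lemma pos_kill (S : H →L[ℂ] H) (hsymm : ∀ x y : H, ⟪S x, y⟫ = ⟪x, S y⟫)
    (hpos : ∀ y : H, 0 ≤ (⟪S y, y⟫).re) (m : H) (hm : (⟪S m, m⟫).re = 0) : S m = 0 := by
  have key : ∀ y : H, (⟪S m, y⟫).re = 0 := by
    intro y
    set a := (⟪S y, y⟫).re with ha
    set b := (⟪S m, y⟫).re with hb
    have hre : (⟪S y, m⟫).re = b := by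
      rw [hsymm y m, ← inner_conj_symm, Complex.conj_re, hb]
    have hquad : ∀ t : ℝ, 0 ≤ t ^ 2 * a + t * (2 * b) := by
      intro t
      have h0 := hpos (m + (t : ℂ) • y)
      have hexp : (⟪S (m + (t:ℂ) • y), m + (t:ℂ) • y⟫).re
          = (⟪S m, m⟫).re + t * ((⟪S m, y⟫).re + (⟪S y, m⟫).re) + t ^ 2 * a := by
        rw [map_add, map_smul]
        simp only [inner_add_left, inner_add_right, inner_smul_left, inner_smul_right,
          Complex.add_re, Complex.mul_re]
        simp [Complex.conj_ofReal]
        ring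
      rw [hexp, hm, hre, ← hb] at h0
      nlinarith [h0]
    have ha0 : 0 ≤ a := hpos y
    have h1 := hquad (-b / (a + 1))
    have ha1 : (0:ℝ) < a + 1 := by linarith
    have h2 : (-b / (a + 1)) ^ 2 * a + (-b / (a + 1)) * (2 * b)
        = (b ^ 2 * a - 2 * b ^ 2 * (a + 1)) / (a + 1) ^ 2 := by
      field_simp
      ring
    rw [h2] at h1
    have h3 : 0 ≤ b ^ 2 * a - 2 * b ^ 2 * (a + 1) := by
      have := (div_nonneg_iff.mp h1)
      rcases this with ⟨h, _⟩ | ⟨h, hneg⟩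
      · exact h
      · nlinarith [sq_nonneg (a+1)]
    have hb2 : b ^ 2 ≤ 0 := by nlinarith
    have hb0 : b ^ 2 = 0 := le_antisymm hb2 (sq_nonneg b)
    exact pow_eq_zero_iff two_ne_zero |>.mp hb0
  have key2 : ∀ y : H, ⟪S m, y⟫ = 0 := by
    intro y
    have h1 := key y
    have h2 := key (Complex.I • y)
    rw [inner_smul_right] at h2
    simp only [Complex.mul_re, Complex.I_re, Complex.I_im] at h2
    apply Complex.ext
    · exact h1
    · simpa using h2
  have := key2 (S m)
  rwa [inner_self_eq_zero] at this

/-- A compact operator sends bounded weakly null sequences to norm-null sequences. -/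
lemma compact_null (K : H →L[ℂ] H) (hK : IsCompactOperator K) (u : ℕ → H)
    (hb : ∀ k, ‖u k‖ ≤ 1) (hw : ∀ y : H, Tendsto (fun k => ⟪y, u k⟫) atTop (𝓝 0)) :
    Tendsto (fun k => ‖K (u k)‖) atTop (𝓝 0) := by
  by_contra hcon
  rw [Metric.tendsto_atTop] at hcon
  push_neg at hcon
  obtain ⟨ε, hε, hfreq⟩ := hcon
  have hfreq' : ∀ N, ∃ n > N, ε ≤ ‖K (u n)‖ := by
    intro N
    obtain ⟨n, hn, hd⟩ := hfreq (N + 1)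
    refine ⟨n, by omega, ?_⟩
    rw [Real.dist_eq, sub_zero, abs_of_nonneg (norm_nonneg _)] at hd
    linarith
  obtain ⟨φ, hφmono, hφ⟩ := Nat.exists_strictMono_subsequence hfreq'
  obtain ⟨C, hCcomp, hCmem⟩ := hK
  obtain ⟨r, hr, hball⟩ := Metric.mem_nhds_iff.mp hCmem
  set v : ℕ → H := fun j => ((r / 2 : ℝ) : ℂ) • u (φ j) with hv
  have hvC : ∀ j, K (v j) ∈ C := by
    intro j
    apply hball
    rw [mem_ball_zero_iff, hv]
    simp only [norm_smul, Complex.norm_real, Real.norm_eq_abs, abs_of_pos (by linarith : (0:ℝ) < r/2)]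
    calc r / 2 * ‖u (φ j)‖ ≤ r / 2 * 1 := by
            have := hb (φ j); nlinarith
      _ < r := by linarith
  obtain ⟨y, hyC, ψ, hψmono, hψ⟩ := hCcomp.tendsto_subseq hvC
  have hy0 : y = 0 := by
    have hz : ∀ z : H, Tendsto (fun j => ⟪z, K (v (ψ j))⟫) atTop (𝓝 0) := by
      intro z
      have h1 : ∀ j, ⟪z, K (v (ψ j))⟫ = ((r / 2 : ℝ) : ℂ) * ⟪adjoint K z, u (φ (ψ j))⟫ := by
        intro j
        rw [hv]
        simp only [map_smul, inner_smul_right, adjoint_inner_left]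
      have h2 : Tendsto (fun j => ⟪adjoint K z, u (φ (ψ j))⟫) atTop (𝓝 0) :=
        (hw (adjoint K z)).comp ((hφmono.comp hψmono).tendsto_atTop)
      simpa [h1] using (h2.const_mul (((r / 2 : ℝ) : ℂ)))
    have h3 : Tendsto (fun j => ⟪y, K (v (ψ j))⟫) atTop (𝓝 ⟪y, y⟫) :=
      Filter.Tendsto.inner tendsto_const_nhds hψ
    have := tendsto_nhds_unique h3 (hz y)
    rwa [inner_self_eq_zero] at this
  have hcontra : ∀ j, ε * (r / 2) ≤ ‖K (v (ψ j))‖ := by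
    intro j
    rw [hv]
    simp only [map_smul, norm_smul, Complex.norm_real, Real.norm_eq_abs,
      abs_of_pos (by linarith : (0:ℝ) < r/2)]
    have := hφ (ψ j)
    nlinarith [norm_nonneg (K (u (φ (ψ j))))]
  have hlim : Tendsto (fun j => ‖K (v (ψ j))‖) atTop (𝓝 ‖y‖) := hψ.norm
  rw [hy0, norm_zero] at hlim
  have : ε * (r / 2) ≤ 0 := ge_of_tendsto hlim (Eventually.of_forall hcontra)
  nlinarith



lemma ortho_seq (A : H →L[ℂ] H)
    (hpick : ∀ (G : Submodule ℂ H), FiniteDimensional ℂ G → ∀ ε : ℝ, 0 < ε →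
      ∃ x, x ∈ Gᗮ ∧ ‖x‖ = 1 ∧ ‖A x - x‖ < ε) :
    ∃ u : ℕ → H, Orthonormal ℂ u ∧ Tendsto (fun k => ‖A (u k) - u k‖) atTop (𝓝 0) := by
  classical
  have hεpos : ∀ k : ℕ, (0:ℝ) < 1 / (k + 1) := fun k => by positivity
  choose f hf1 hf2 hf3 using hpick
  let g : ℕ → {G : Submodule ℂ H // FiniteDimensional ℂ G} := fun n =>
    Nat.rec ⟨⊥, inferInstance⟩
      (fun k ih => ⟨ih.1 ⊔ (ℂ ∙ (f ih.1 ih.2 (1/(k+1)) (hεpos k))),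
        by haveI := ih.2; exact Submodule.finiteDimensional_sup _ _⟩) n
  let u : ℕ → H := fun k => f (g k).1 (g k).2 (1/(k+1)) (hεpos k)
  have hgsucc : ∀ k, (g (k+1)).1 = (g k).1 ⊔ (ℂ ∙ u k) := fun k => rfl
  have hgmono : ∀ j k, j ≤ k → (g j).1 ≤ (g k).1 := by
    intro j k hjk
    induction k with
    | zero => simp_all
    | succ n ih =>
      rcases Nat.lt_or_ge j (n+1) with h | h
      · exact (ih (by omega)).trans (by rw [hgsucc]; exact le_sup_left)
      · have : j = n + 1 := by omega
        simp [this]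
  have humem : ∀ j k, j < k → u j ∈ (g k).1 := by
    intro j k hjk
    have h1 : u j ∈ (g (j+1)).1 := by
      rw [hgsucc]
      exact Submodule.mem_sup_right (Submodule.mem_span_singleton_self _)
    exact hgmono (j+1) k hjk h1
  have hu1 : ∀ k, ‖u k‖ = 1 := fun k => hf2 _ _ _ _
  have huo : ∀ k, u k ∈ ((g k).1)ᗮ := fun k => hf1 _ _ _ _
  have hlt : ∀ k, ‖A (u k) - u k‖ < 1/(k+1) := fun k => hf3 _ _ _ _
  refine ⟨u, ⟨hu1, ?_⟩, ?_⟩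
  · intro i j hij
    rcases lt_or_gt_of_ne hij with h | h
    · exact (Submodule.mem_orthogonal _ _).mp (huo j) (u i) (humem i j h)
    · rw [← inner_conj_symm]
      rw [(Submodule.mem_orthogonal _ _).mp (huo i) (u j) (humem j i h)]
      simp
  · apply squeeze_zero (fun k => norm_nonneg _) (fun k => (hlt k).le)
    exact tendsto_one_div_add_atTop_nhds_zero_nat


theorem main (T : H →L[ℂ] H) (hT : ‖T‖ ≤ 1)
    (A : H →L[ℂ] H)
    (hA : ∀ x : H, Tendsto (fun n : ℕ => (adjoint (T ^ n) ∘L T ^ n) x) atTop (𝓝 (A x)))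
    (hnotproj : ¬ (IsSelfAdjoint A ∧ IsIdempotentElem A ∧
      FiniteDimensional ℂ (LinearMap.range (A : H →ₗ[ℂ] H)))) :
    essentialSpectralRadius A = 1 := by
  classical
  set S : ℕ → (H →L[ℂ] H) := fun n => adjoint (T ^ n) ∘L T ^ n with hS
  -- basic norm facts
  have hTx : ∀ x : H, ‖T x‖ ≤ ‖x‖ := by
    intro x
    calc ‖T x‖ ≤ ‖T‖ * ‖x‖ := T.le_opNorm x
      _ ≤ 1 * ‖x‖ := by gcongr
      _ = ‖x‖ := one_mul _
  have hTn : ∀ (n : ℕ) (x : H), ‖(T ^ n) x‖ ≤ ‖x‖ := by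
    intro n
    induction n with
    | zero => intro x; simp
    | succ n ih =>
      intro x
      have h1 : (T ^ (n+1)) x = (T ^ n) (T x) := by
        rw [pow_succ]; rfl
      rw [h1]
      exact (ih (T x)).trans (hTx x)
  have hTn' : ∀ n : ℕ, ‖T ^ n‖ ≤ 1 :=
    fun n => opNorm_le_bound _ zero_le_one (fun x => by simpa using hTn n x)
  have hSx : ∀ (n : ℕ) (x : H), ‖S n x‖ ≤ ‖(T ^ n) x‖ := by
    intro n x
    have : S n x = adjoint (T ^ n) ((T ^ n) x) := rfl
    rw [this]
    calc ‖adjoint (T ^ n) ((T ^ n) x)‖ ≤ ‖adjoint (T ^ n)‖ * ‖(T ^ n) x‖ :=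
          le_opNorm _ _
      _ ≤ 1 * ‖(T ^ n) x‖ := by
          gcongr
          rw [LinearIsometryEquiv.norm_map]
          exact hTn' n
      _ = _ := one_mul _
  have hSx' : ∀ (n : ℕ) (x : H), ‖S n x‖ ≤ ‖x‖ := fun n x => (hSx n x).trans (hTn n x)
  have hre : ∀ (n : ℕ) (x : H), (⟪S n x, x⟫).re = ‖(T ^ n) x‖ ^ 2 := by
    intro n x
    have h1 : ⟪S n x, x⟫ = ⟪(T ^ n) x, (T ^ n) x⟫ := by
      have : S n x = adjoint (T ^ n) ((T ^ n) x) := rfl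
      rw [this, adjoint_inner_left]
    rw [h1, inner_self_eq_norm_sq_to_K]
    norm_cast
  set α : H → ℝ := fun x => (⟪A x, x⟫).re with hα
  have hlim : ∀ x : H, Tendsto (fun n => ‖(T ^ n) x‖ ^ 2) atTop (𝓝 (α x)) := by
    intro x
    have h1 : Tendsto (fun n => ⟪S n x, x⟫) atTop (𝓝 ⟪A x, x⟫) :=
      Filter.Tendsto.inner (hA x) tendsto_const_nhds
    have h2 : Tendsto (fun n => (⟪S n x, x⟫).re) atTop (𝓝 (α x)) :=
      (Complex.continuous_re.tendsto _).comp h1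
    exact h2.congr (fun n => hre n x)
  have hαnonneg : ∀ x, 0 ≤ α x := by
    intro x
    exact ge_of_tendsto (hlim x) (Eventually.of_forall fun n => by positivity)
  have hαle : ∀ x, α x ≤ ‖x‖ ^ 2 := by
    intro x
    refine le_of_tendsto (hlim x) (Eventually.of_forall fun n => ?_)
    have := hTn n x
    nlinarith [norm_nonneg ((T^n) x)]
  have hsymm : ∀ x y : H, ⟪A x, y⟫ = ⟪x, A y⟫ := by
    intro x y
    have h1 : Tendsto (fun n => ⟪S n x, y⟫) atTop (𝓝 ⟪A x, y⟫) :=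
      Filter.Tendsto.inner (hA x) tendsto_const_nhds
    have h2 : Tendsto (fun n => ⟪x, S n y⟫) atTop (𝓝 ⟪x, A y⟫) :=
      Filter.Tendsto.inner tendsto_const_nhds (hA y)
    have h3 : (fun n => ⟪S n x, y⟫) = fun n => ⟪x, S n y⟫ := by
      funext n
      have e1 : S n x = adjoint (T ^ n) ((T ^ n) x) := rfl
      have e2 : S n y = adjoint (T ^ n) ((T ^ n) y) := rfl
      rw [e1, e2, adjoint_inner_left, adjoint_inner_right]
    rw [h3] at h1
    exact tendsto_nhds_unique h1 h2
  have hAsa : IsSelfAdjoint A :=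
    ContinuousLinearMap.isSelfAdjoint_iff_isSymmetric.mpr (fun x y => hsymm x y)
  have hAnorm : ∀ x, ‖A x‖ ≤ ‖x‖ := by
    intro x
    exact le_of_tendsto ((hA x).norm) (Eventually.of_forall fun n => hSx' n x)
  have hAsq : ∀ x, ‖A x‖ ^ 2 ≤ α x := by
    intro x
    refine le_of_tendsto_of_tendsto' (((hA x).norm).pow 2) (hlim x)
      (fun n => ?_)
    have h1 := hSx n x
    nlinarith [norm_nonneg (S n x), norm_nonneg ((T^n) x)]
  have hshift : ∀ (k : ℕ) (x : H), α ((T ^ k) x) = α x := by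
    intro k x
    have h2 : Tendsto (fun n => ‖(T ^ (n + k)) x‖ ^ 2) atTop (𝓝 (α x)) :=
      (hlim x).comp (tendsto_add_atTop_nat k)
    have h3 : (fun n => ‖(T ^ n) ((T ^ k) x)‖ ^ 2) = fun n => ‖(T ^ (n + k)) x‖ ^ 2 := by
      funext n
      rw [pow_add]
      rfl
    rw [← h3] at h2
    exact tendsto_nhds_unique (hlim _) h2
  have hdiff : ∀ y : H, ‖y - A y‖ ^ 2 ≤ ‖y‖ ^ 2 - α y := by
    intro y
    have h1 : ‖y - A y‖ ^ 2 = ‖y‖ ^ 2 - 2 * (⟪y, A y⟫).re + ‖A y‖ ^ 2 := by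
      exact_mod_cast @norm_sub_sq ℂ _ _ _ _ y (A y)
    have h2 : (⟪y, A y⟫).re = α y := by
      rw [← hsymm y y]
    have h3 := hAsq y
    rw [h1, h2]
    linarith
  -- fixed point set
  set M : Submodule ℂ H := LinearMap.ker (((1 : H →L[ℂ] H) - A : H →L[ℂ] H) : H →ₗ[ℂ] H) with hMdef
  have hMmem : ∀ x : H, x ∈ M ↔ A x = x := by
    intro x
    rw [hMdef]
    constructor
    · intro hx
      have : ((1 : H →L[ℂ] H) - A) x = 0 := hx
      have h2 : x - A x = 0 := by simpa using this
      have := sub_eq_zero.mp h2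
      exact this.symm
    · intro hx
      show ((1 : H →L[ℂ] H) - A) x = 0
      simp [hx]
  have hone_sub_symm : ∀ x y : H, ⟪((1 : H →L[ℂ] H) - A) x, y⟫ = ⟪x, ((1 : H →L[ℂ] H) - A) y⟫ := by
    intro x y
    simp only [sub_apply, ContinuousLinearMap.one_apply, inner_sub_left, inner_sub_right, hsymm]
  have hone_sub_pos : ∀ y : H, 0 ≤ (⟪((1 : H →L[ℂ] H) - A) y, y⟫).re := by
    intro y
    simp only [sub_apply, ContinuousLinearMap.one_apply, inner_sub_left, Complex.sub_re]
    have h1 : (⟪y, y⟫).re = ‖y‖ ^ 2 := by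
      rw [@inner_self_eq_norm_sq_to_K ℂ]
      norm_cast
    rw [h1]
    have := hαle y
    linarith
  have hquadform : ∀ y : H, (⟪((1 : H →L[ℂ] H) - A) y, y⟫).re = ‖y‖ ^ 2 - α y := by
    intro y
    simp only [sub_apply, ContinuousLinearMap.one_apply, inner_sub_left, Complex.sub_re]
    have h1 : (⟪y, y⟫).re = ‖y‖ ^ 2 := by
      rw [@inner_self_eq_norm_sq_to_K ℂ]
      norm_cast
    rw [h1]
  have hfix : ∀ x : H, α x = ‖x‖ ^ 2 → A x = x := by
    intro x hx
    have h0 : (⟪((1 : H →L[ℂ] H) - A) x, x⟫).re = 0 := by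
      rw [hquadform, hx]; ring
    have := pos_kill _ hone_sub_symm hone_sub_pos x h0
    have h2 : x - A x = 0 := by simpa using this
    exact (sub_eq_zero.mp h2).symm
  have hαM : ∀ x ∈ M, α x = ‖x‖ ^ 2 := by
    intro x hx
    have h1 : A x = x := (hMmem x).mp hx
    rw [hα]
    simp only [h1]
    rw [@inner_self_eq_norm_sq_to_K ℂ]
    norm_cast
  by_cases hcon : ∃ F : Submodule ℂ H, FiniteDimensional ℂ F ∧ ∃ ε : ℝ, 0 < ε ∧
      ∀ x ∈ Fᗮ, ε * ‖x‖ ≤ ‖x - A x‖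
  · obtain ⟨F, hF, ε, hε, hFε⟩ := hcon
    haveI := hF
    -- M is finite dimensional
    haveI hMfd : FiniteDimensional ℂ M := by
      let L : M →ₗ[ℂ] F := (Submodule.orthogonalProjection F).toLinearMap.comp M.subtype
      have hinj : Function.Injective L := by
        rw [← LinearMap.ker_eq_bot, LinearMap.ker_eq_bot']
        intro m hm
        have h1 : (Submodule.orthogonalProjection F) (m : H) = 0 := hm
        have h2 : (m : H) ∈ Fᗮ := by
          have : (m : H) - ((Submodule.orthogonalProjection F (m : H) : F) : H) ∈ Fᗮ :=
            Submodule.sub_starProjection_mem_orthogonal (K := F) (m : H)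
          rwa [h1, Submodule.coe_zero, sub_zero] at this
        have h3 := hFε (m : H) h2
        have h4 : A (m : H) = m := (hMmem m).mp m.2
        rw [h4, sub_self, norm_zero] at h3
        have h5 : ‖(m : H)‖ = 0 := by nlinarith [norm_nonneg (m : H)]
        exact Subtype.ext (by simpa using h5)
      exact FiniteDimensional.of_injective L hinj
    -- T acts isometrically on M
    have hTM : ∀ x ∈ M, T x ∈ M ∧ ‖T x‖ = ‖x‖ := by
      intro x hx
      have h1 : α (T x) = α x := by
        have := hshift 1 x
        rwa [pow_one] at this
      have h2 : α x = ‖x‖ ^ 2 := hαM x hx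
      have h3 : ‖T x‖ ^ 2 ≤ ‖x‖ ^ 2 := by nlinarith [hTx x, norm_nonneg (T x), norm_nonneg x]
      have h4 : α (T x) ≤ ‖T x‖ ^ 2 := hαle (T x)
      have h5 : ‖T x‖ ^ 2 = ‖x‖ ^ 2 := by linarith
      have h6 : ‖T x‖ = ‖x‖ := by
        exact (pow_left_inj₀ (norm_nonneg _) (norm_nonneg _) two_ne_zero).mp h5
      refine ⟨(hMmem _).mpr (hfix _ ?_), h6⟩
      rw [h1, h2, h6]
    -- T^* T = 1 on M
    have hTTm : ∀ x ∈ M, adjoint T (T x) = x := by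
      intro x hx
      have hsmm : ∀ a b : H, ⟪((1 : H →L[ℂ] H) - adjoint T ∘L T) a, b⟫
          = ⟪a, ((1 : H →L[ℂ] H) - adjoint T ∘L T) b⟫ := by
        intro a b
        simp only [sub_apply, ContinuousLinearMap.one_apply, inner_sub_left, inner_sub_right, comp_apply]
        rw [adjoint_inner_left, adjoint_inner_right]
      have hquad : ∀ b : H, (⟪((1 : H →L[ℂ] H) - adjoint T ∘L T) b, b⟫).re
          = ‖b‖ ^ 2 - ‖T b‖ ^ 2 := by
        intro b
        simp only [sub_apply, ContinuousLinearMap.one_apply, inner_sub_left, Complex.sub_re, comp_apply]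
        rw [adjoint_inner_left]
        have h1 : (⟪b, b⟫).re = ‖b‖ ^ 2 := by
          rw [@inner_self_eq_norm_sq_to_K ℂ]; norm_cast
        have h2 : (⟪T b, T b⟫).re = ‖T b‖ ^ 2 := by
          rw [@inner_self_eq_norm_sq_to_K ℂ]; norm_cast
        rw [h1, h2]
      have hps : ∀ b : H, 0 ≤ (⟪((1 : H →L[ℂ] H) - adjoint T ∘L T) b, b⟫).re := by
        intro b
        rw [hquad]
        nlinarith [hTx b, norm_nonneg (T b), norm_nonneg b]
      have h0 : (⟪((1 : H →L[ℂ] H) - adjoint T ∘L T) x, x⟫).re = 0 := by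
        rw [hquad, (hTM x hx).2]; ring
      have := pos_kill _ hsmm hps x h0
      have h2 : x - adjoint T (T x) = 0 := by simpa using this
      exact (sub_eq_zero.mp h2).symm
    -- adjoint T maps M to M
    have hT'M : ∀ x ∈ M, adjoint T x ∈ M := by
      intro x hx
      let TM : M →ₗ[ℂ] M := (T : H →ₗ[ℂ] H).restrict (fun a ha => (hTM a ha).1)
      have hTMinj : Function.Injective TM := by
        rw [← LinearMap.ker_eq_bot, LinearMap.ker_eq_bot']
        intro m hm
        have h1 : T (m : H) = 0 := by
          have : ((TM m : M) : H) = (0 : H) := by rw [hm]; rfl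
          simpa [TM, LinearMap.restrict_apply] using this
        have h2 := (hTM (m : H) m.2).2
        rw [h1, norm_zero] at h2
        exact Subtype.ext (by simpa using h2.symm)
      have hTMsurj := LinearMap.injective_iff_surjective.mp hTMinj
      obtain ⟨y, hy⟩ := hTMsurj ⟨x, hx⟩
      have h3 : T (y : H) = x := by
        have : ((TM y : M) : H) = x := by rw [hy]
        simpa [TM, LinearMap.restrict_apply] using this
      have h4 : adjoint T x = (y : H) := by
        rw [← h3, hTTm (y : H) y.2]
      rw [h4]
      exact y.2
    -- N and invariance
    set N := Mᗮ with hNdef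
    have hTN : ∀ x ∈ N, T x ∈ N := by
      intro x hx
      rw [hNdef, Submodule.mem_orthogonal]
      intro v hv
      have h1 : ⟪adjoint T v, x⟫ = ⟪v, T x⟫ := adjoint_inner_left T x v
      rw [← h1]
      exact (Submodule.mem_orthogonal _ _).mp hx _ (hT'M v hv)
    have hTkN : ∀ (k : ℕ), ∀ x ∈ N, (T ^ k) x ∈ N := by
      intro k
      induction k with
      | zero => intro x hx; simpa using hx
      | succ n ih =>
        intro x hx
        have h1 : (T ^ (n+1)) x = T ((T ^ n) x) := by rw [pow_succ']; rfl
        rw [h1]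
        exact hTN _ (ih x hx)
    -- Step 4 : 1 - A is bounded below on N
    have hbb : ∃ c : ℝ, 0 < c ∧ ∀ x ∈ N, c * ‖x‖ ≤ ‖x - A x‖ := by
      by_contra hno
      push_neg at hno
      have hex : ∀ k : ℕ, ∃ x : H, x ∈ N ∧ ‖x‖ = 1 ∧ ‖x - A x‖ < 1/(k+1) := by
        intro k
        obtain ⟨x, hxN, hxlt⟩ := hno (1/(k+1)) (by positivity)
        have hx0 : ‖x‖ ≠ 0 := by
          intro h
          rw [h, mul_zero] at hxlt
          exact absurd hxlt (not_lt.mpr (norm_nonneg _))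
        have hxpos : 0 < ‖x‖ := lt_of_le_of_ne (norm_nonneg x) (Ne.symm hx0)
        refine ⟨((‖x‖⁻¹ : ℝ) : ℂ) • x, Submodule.smul_mem _ _ hxN, ?_, ?_⟩
        · rw [norm_smul]
          simp only [Complex.norm_real, Real.norm_eq_abs, abs_of_pos (inv_pos.mpr hxpos)]
          field_simp
        · have h1 : ((‖x‖⁻¹ : ℝ) : ℂ) • x - A (((‖x‖⁻¹ : ℝ) : ℂ) • x)
              = ((‖x‖⁻¹ : ℝ) : ℂ) • (x - A x) := by
            rw [map_smul, smul_sub]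
          rw [h1, norm_smul]
          simp only [Complex.norm_real, Real.norm_eq_abs, abs_of_pos (inv_pos.mpr hxpos)]
          calc ‖x‖⁻¹ * ‖x - A x‖ < ‖x‖⁻¹ * (1/(k+1) * ‖x‖) := by
                apply mul_lt_mul_of_pos_left hxlt (inv_pos.mpr hxpos)
            _ = 1/(k+1) := by field_simp
      choose v hvN hv1 hvlt using hex
      haveI : CompleteSpace F := FiniteDimensional.complete ℂ F
      set Q := Submodule.orthogonalProjection F with hQdef
      have hQnorm : ∀ y : H, ‖(Q y : H)‖ ≤ ‖y‖ := by
        intro y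
        rw [← Submodule.coe_norm]
        calc ‖Q y‖ ≤ ‖Q‖ * ‖y‖ := Q.le_opNorm y
          _ ≤ 1 * ‖y‖ := by gcongr; exact Submodule.orthogonalProjection_norm_le F
          _ = ‖y‖ := one_mul _
      have hQb : ∀ k, Q (v k) ∈ Metric.closedBall (0 : F) 1 := by
        intro k
        rw [Metric.mem_closedBall, dist_zero_right, Submodule.coe_norm]
        calc ‖(Q (v k) : H)‖ ≤ ‖v k‖ := hQnorm _
          _ = 1 := hv1 k
      haveI : ProperSpace F := FiniteDimensional.proper ℂ F
      obtain ⟨p, hp, φ, hφmono, hφten⟩ := (isCompact_closedBall (0:F) 1).tendsto_subseq hQb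
      have hQcauchy : CauchySeq (fun j => Q (v (φ j))) := hφten.cauchySeq
      have hδ : ∀ j : ℕ, ‖v (φ j) - A (v (φ j))‖ < 1/(j+1) := by
        intro j
        calc ‖v (φ j) - A (v (φ j))‖ < 1/(φ j + 1) := hvlt _
          _ ≤ 1/(j+1) := by
              apply one_div_le_one_div_of_le (by positivity)
              have hj : (j:ℝ) ≤ (φ j : ℝ) := by exact_mod_cast hφmono.le_apply
              linarith
      have hwcauchy : CauchySeq (fun j => v (φ j)) := by
        rw [Metric.cauchySeq_iff']
        intro η hη
        set η1 := ε * η / (2 * (ε + 4)) with hη1def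
        have hη1 : 0 < η1 := by
          apply div_pos (mul_pos hε hη)
          nlinarith
        obtain ⟨N1, hN1⟩ := Metric.cauchySeq_iff.mp hQcauchy η1 hη1
        obtain ⟨N2, hN2⟩ := exists_nat_one_div_lt hη1
        refine ⟨max N1 N2, ?_⟩
        intro n hn
        set NN := max N1 N2 with hNN
        set d := v (φ n) - v (φ NN) with hd
        have hQd : ((Q d : H)) = (Q (v (φ n)) : H) - (Q (v (φ NN)) : H) := by
          rw [hd, map_sub]; rfl
        have hQdlt : ‖(Q d : H)‖ < η1 := by
          rw [hQd]
          have := hN1 n (le_trans (le_max_left _ _) hn) NN (le_max_left _ _)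
          rw [Subtype.dist_eq, dist_eq_norm] at this
          simpa using this
        set r := d - (Q d : H) with hr
        have hrF : r ∈ Fᗮ := Submodule.sub_starProjection_mem_orthogonal (K := F) d
        have hrA := hFε r hrF
        have hdA : ‖d - A d‖ < 2 * η1 := by
          have h1 : d - A d = (v (φ n) - A (v (φ n))) - (v (φ NN) - A (v (φ NN))) := by
            rw [hd, map_sub]; abel
          rw [h1]
          have h2 := hδ n
          have h3 := hδ NN
          have h4 : 1/((n:ℝ)+1) ≤ 1/((N2:ℝ)+1) := by
            apply one_div_le_one_div_of_le (by positivity)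
            have h4' : (N2:ℝ) ≤ (n:ℝ) := by exact_mod_cast le_trans (le_max_right _ _) hn
            linarith
          have h5 : 1/((NN:ℝ)+1) ≤ 1/((N2:ℝ)+1) := by
            apply one_div_le_one_div_of_le (by positivity)
            have h5' : (N2:ℝ) ≤ (NN:ℝ) := by exact_mod_cast (le_max_right N1 N2)
            linarith
          calc ‖(v (φ n) - A (v (φ n))) - (v (φ NN) - A (v (φ NN)))‖
              ≤ ‖v (φ n) - A (v (φ n))‖ + ‖v (φ NN) - A (v (φ NN))‖ := norm_sub_le _ _
            _ < 2 * η1 := by linarith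
        have hQdA : ‖(Q d : H) - A (Q d : H)‖ ≤ 2 * ‖(Q d : H)‖ := by
          calc ‖(Q d : H) - A (Q d : H)‖ ≤ ‖(Q d : H)‖ + ‖A (Q d : H)‖ := norm_sub_le _ _
            _ ≤ ‖(Q d : H)‖ + ‖(Q d : H)‖ := by linarith [hAnorm ((Q d : H))]
            _ = 2 * ‖(Q d : H)‖ := by ring
        have hgen : ∀ a b : H, (a - b) - A (a - b) = (a - A a) - (b - A b) := by
          intro a b
          rw [map_sub]
          abel
        have hrAr : ‖r - A r‖ ≤ ‖d - A d‖ + ‖(Q d : H) - A (Q d : H)‖ := by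
          have h1 : r - A r = (d - A d) - ((Q d : H) - A (Q d : H)) := by
            rw [hr]
            exact hgen d _
          rw [h1]
          exact norm_sub_le _ _
        have hrnorm : ε * ‖r‖ < 4 * η1 := by
          calc ε * ‖r‖ ≤ ‖r - A r‖ := hrA
            _ ≤ ‖d - A d‖ + ‖(Q d : H) - A (Q d : H)‖ := hrAr
            _ ≤ ‖d - A d‖ + 2 * ‖(Q d : H)‖ := by linarith
            _ < 2 * η1 + 2 * η1 := by linarith
            _ = 4 * η1 := by ring
        have hdnorm : ‖d‖ < η := by
          have h1 : ‖d‖ ≤ ‖(Q d : H)‖ + ‖r‖ := by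
            have : d = (Q d : H) + r := by rw [hr]; abel
            calc ‖d‖ = ‖(Q d : H) + r‖ := by rw [← this]
              _ ≤ ‖(Q d : H)‖ + ‖r‖ := norm_add_le _ _
          have h2 : ‖r‖ < 4 * η1 / ε := by
            rw [lt_div_iff₀ hε]
            nlinarith
          have h3 : η1 + 4 * η1 / ε = η / 2 := by
            rw [hη1def]
            field_simp
          have h4 : ‖d‖ < η1 + 4 * η1 / ε := by linarith
          rw [h3] at h4
          linarith
        rw [dist_eq_norm]
        exact hdnorm
      obtain ⟨w, hw⟩ := cauchySeq_tendsto_of_complete hwcauchy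
      have hwnorm : ‖w‖ = 1 := by
        have h1 : Tendsto (fun j => ‖v (φ j)‖) atTop (𝓝 ‖w‖) := hw.norm
        have h2 : (fun j => ‖v (φ j)‖) = fun _ => (1:ℝ) := funext fun j => hv1 _
        rw [h2] at h1
        exact (tendsto_nhds_unique tendsto_const_nhds h1).symm
      have hwN : w ∈ N := by
        have : IsClosed (N : Set H) := M.isClosed_orthogonal
        exact this.mem_of_tendsto hw (Eventually.of_forall fun j => hvN _)
      have hwA : A w = w := by
        have h1 : Tendsto (fun j => v (φ j) - A (v (φ j))) atTop (𝓝 (w - A w)) :=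
          hw.sub ((A.continuous.tendsto w).comp hw)
        have h2 : Tendsto (fun j => ‖v (φ j) - A (v (φ j))‖) atTop (𝓝 0) := by
          apply squeeze_zero (fun j => norm_nonneg _) (fun j => (hδ j).le)
          exact tendsto_one_div_add_atTop_nhds_zero_nat
        have h3 := tendsto_nhds_unique h1.norm h2
        have h4 : w - A w = 0 := by rwa [norm_eq_zero] at h3
        exact (sub_eq_zero.mp h4).symm
      have hwM : w ∈ M := (hMmem w).mpr hwA
      have h0 : ⟪w, w⟫ = 0 := (Submodule.mem_orthogonal _ _).mp hwN w hwM
      rw [inner_self_eq_zero] at h0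
      rw [h0, norm_zero] at hwnorm
      norm_num at hwnorm
    obtain ⟨c, hc, hcN⟩ := hbb
    -- Step 5 : A vanishes on N
    have hAN0 : ∀ x ∈ N, A x = 0 := by
      intro x hx
      have hL : ∀ n : ℕ, c^2 * ‖(T^n) x‖^2 ≤ ‖(T^n) x‖^2 - α x := by
        intro n
        have h1 := hcN _ (hTkN n x hx)
        have h2 := hdiff ((T^n) x)
        have h3 : α ((T^n) x) = α x := hshift n x
        rw [h3] at h2
        have hsq : (c * ‖(T^n) x‖)^2 ≤ ‖(T^n) x - A ((T^n) x)‖^2 := by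
          have hnn : 0 ≤ c * ‖(T^n) x‖ := by positivity
          exact pow_le_pow_left₀ hnn h1 2
        nlinarith [hsq, h2]
      have h4 : Tendsto (fun n => c^2 * ‖(T^n) x‖^2) atTop (𝓝 (c^2 * α x)) :=
        (hlim x).const_mul _
      have h5 : Tendsto (fun n => ‖(T^n) x‖^2 - α x) atTop (𝓝 (α x - α x)) :=
        (hlim x).sub_const _
      have h6 : c^2 * α x ≤ α x - α x := le_of_tendsto_of_tendsto' h4 h5 hL
      have hαx : α x = 0 := by
        have hc2 : 0 < c^2 := by positivity
        have h7 : α x ≤ 0 := by nlinarith [h6, hc2]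
        exact le_antisymm h7 (hαnonneg x)
      have h7 := hAsq x
      rw [hαx] at h7
      have h8 : ‖A x‖ = 0 := by
        have h9 : ‖A x‖^2 = 0 := le_antisymm h7 (by positivity)
        exact pow_eq_zero_iff two_ne_zero |>.mp h9
      rwa [norm_eq_zero] at h8
    -- Step 6 : A is the (finite-rank) orthogonal projection onto M
    haveI : CompleteSpace M := FiniteDimensional.complete ℂ M
    have hAP : ∀ x : H, A x = ((Submodule.orthogonalProjection M x : M) : H) := by
      intro x
      have h1 : x - ((Submodule.orthogonalProjection M x : M) : H) ∈ N :=
        Submodule.sub_starProjection_mem_orthogonal (K := M) x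
      have h2 : A (x - ((Submodule.orthogonalProjection M x : M) : H)) = 0 := hAN0 _ h1
      have h3 : A ((Submodule.orthogonalProjection M x : M) : H) = ((Submodule.orthogonalProjection M x : M) : H) :=
        (hMmem _).mp (SetLike.coe_mem _)
      calc A x = A (((Submodule.orthogonalProjection M x : M) : H) + (x - ((Submodule.orthogonalProjection M x : M) : H))) := by
            congr 1; abel
        _ = A ((Submodule.orthogonalProjection M x : M) : H) + A (x - ((Submodule.orthogonalProjection M x : M) : H)) := map_add _ _ _
        _ = ((Submodule.orthogonalProjection M x : M) : H) := by rw [h2, h3, add_zero]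
    have hidem : IsIdempotentElem A := by
      show A * A = A
      ext x
      have h1 : (A * A) x = A (A x) := rfl
      rw [h1, hAP x]
      have h2 : A ((Submodule.orthogonalProjection M x : M) : H) = ((Submodule.orthogonalProjection M x : M) : H) :=
        (hMmem _).mp (SetLike.coe_mem _)
      rw [h2, ← hAP x]
    have hfd : FiniteDimensional ℂ (LinearMap.range (A : H →ₗ[ℂ] H)) := by
      have hle : LinearMap.range (A : H →ₗ[ℂ] H) ≤ M := by
        rintro y ⟨x, rfl⟩
        rw [ContinuousLinearMap.coe_coe, hAP x]
        exact SetLike.coe_mem _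
      exact Submodule.finiteDimensional_of_le hle
    exact absurd ⟨hAsa, hidem, hfd⟩ hnotproj
  · push_neg at hcon
    have hpick : ∀ (G : Submodule ℂ H), FiniteDimensional ℂ G → ∀ ε : ℝ, 0 < ε →
        ∃ x, x ∈ Gᗮ ∧ ‖x‖ = 1 ∧ ‖A x - x‖ < ε := by
      intro G hG ε' hε'
      obtain ⟨x, hxG, hxlt⟩ := hcon G hG ε' hε'
      have hx0 : ‖x‖ ≠ 0 := by
        intro h
        rw [h, mul_zero] at hxlt
        exact absurd hxlt (not_lt.mpr (norm_nonneg _))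
      have hxpos : 0 < ‖x‖ := lt_of_le_of_ne (norm_nonneg x) (Ne.symm hx0)
      refine ⟨((‖x‖⁻¹ : ℝ) : ℂ) • x, Submodule.smul_mem _ _ hxG, ?_, ?_⟩
      · rw [norm_smul]
        simp only [Complex.norm_real, Real.norm_eq_abs, abs_of_pos (inv_pos.mpr hxpos)]
        field_simp
      · have h1 : A (((‖x‖⁻¹ : ℝ) : ℂ) • x) - ((‖x‖⁻¹ : ℝ) : ℂ) • x
            = ((‖x‖⁻¹ : ℝ) : ℂ) • (A x - x) := by
          rw [map_smul, smul_sub]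
        rw [h1, norm_smul]
        simp only [Complex.norm_real, Real.norm_eq_abs, abs_of_pos (inv_pos.mpr hxpos)]
        have h2 : ‖A x - x‖ = ‖x - A x‖ := norm_sub_rev _ _
        calc ‖x‖⁻¹ * ‖A x - x‖ < ‖x‖⁻¹ * (ε' * ‖x‖) := by
              rw [h2]; exact mul_lt_mul_of_pos_left hxlt (inv_pos.mpr hxpos)
          _ = ε' := by field_simp
    obtain ⟨u, huon, hulim⟩ := ortho_seq A hpick
    have hu1 : ∀ k, ‖u k‖ = 1 := huon.1
    have hweak : ∀ y : H, Tendsto (fun k => ⟪y, u k⟫) atTop (𝓝 0) := by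
      intro y
      have hsum : Summable fun i => ‖⟪u i, y⟫‖ ^ 2 := huon.inner_products_summable y
      have h1 := hsum.tendsto_atTop_zero
      have h2 : Tendsto (fun k => ‖⟪u k, y⟫‖) atTop (𝓝 0) := by
        have h3 : (fun k => ‖⟪u k, y⟫‖) = fun k => Real.sqrt (‖⟪u k, y⟫‖ ^ 2) := by
          funext k; rw [Real.sqrt_sq (norm_nonneg _)]
        rw [h3]
        have h4 := (Real.continuous_sqrt.tendsto 0).comp h1
        rw [Real.sqrt_zero] at h4
        exact h4
      rw [tendsto_zero_iff_norm_tendsto_zero]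
      exact h2.congr (fun k => (norm_inner_symm (u k) y))
    have hApow : ∀ (n : ℕ) (y : H), ‖(A ^ n) y‖ ≤ ‖y‖ := by
      intro n
      induction n with
      | zero => intro y; simp
      | succ n ih =>
        intro y
        have h1 : (A ^ (n+1)) y = (A ^ n) (A y) := by rw [pow_succ]; rfl
        rw [h1]
        exact (ih (A y)).trans (hAnorm y)
    have htel : ∀ (n : ℕ) (y : H), ‖(A ^ n) y - y‖ ≤ (n : ℝ) * ‖A y - y‖ := by
      intro n
      induction n with
      | zero => intro y; simp
      | succ n ih =>
        intro y
        have e1 : (A ^ (n+1)) y = (A ^ n) (A y) := by rw [pow_succ]; rfl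
        have e2 : (A ^ (n+1)) y - y = (A ^ n) (A y - y) + ((A ^ n) y - y) := by
          rw [e1, map_sub]; abel
        rw [e2]
        calc ‖(A ^ n) (A y - y) + ((A ^ n) y - y)‖
            ≤ ‖(A ^ n) (A y - y)‖ + ‖(A ^ n) y - y‖ := norm_add_le _ _
          _ ≤ ‖A y - y‖ + (n : ℝ) * ‖A y - y‖ := by
              have h3 := hApow n (A y - y)
              have h4 := ih y
              linarith
          _ = ((n+1 : ℕ) : ℝ) * ‖A y - y‖ := by push_cast; ring
    have hpowlim : ∀ n : ℕ, Tendsto (fun k => ‖(A ^ n) (u k) - u k‖) atTop (𝓝 0) := by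
      intro n
      apply squeeze_zero (fun k => norm_nonneg _) (fun k => htel n (u k))
      simpa using hulim.const_mul (n : ℝ)
    have hEN : ∀ n : ℕ, essentialNorm (A ^ n) = 1 := by
      intro n
      unfold essentialNorm
      have hbdd : BddBelow {c : ℝ | ∃ K : H →L[ℂ] H, IsCompactOperator K ∧ c = ‖A ^ n - K‖} := by
        refine ⟨0, ?_⟩
        rintro c ⟨K, hK, rfl⟩
        exact norm_nonneg _
      have hmem0 : ‖A ^ n - 0‖ ∈
          {c : ℝ | ∃ K : H →L[ℂ] H, IsCompactOperator K ∧ c = ‖A ^ n - K‖} := by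
        refine ⟨0, ?_, rfl⟩
        have h0 : ⇑(0 : H →L[ℂ] H) = (0 : H → H) := rfl
        show IsCompactOperator ⇑(0 : H →L[ℂ] H)
        rw [h0]
        exact isCompactOperator_zero
      apply le_antisymm
      · have h1 : sInf {c : ℝ | ∃ K : H →L[ℂ] H, IsCompactOperator K ∧ c = ‖A ^ n - K‖}
            ≤ ‖A ^ n - 0‖ := csInf_le hbdd hmem0
        have h2 : ‖A ^ n - 0‖ ≤ 1 := by
          rw [sub_zero]
          exact opNorm_le_bound _ zero_le_one (fun y => by simpa using hApow n y)
        exact h1.trans h2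
      · apply le_csInf ⟨_, hmem0⟩
        rintro b ⟨K, hK, rfl⟩
        have hKnull := compact_null K hK u (fun k => (hu1 k).le) hweak
        have hlow : ∀ k, 1 - ‖(A ^ n) (u k) - u k‖ - ‖K (u k)‖ ≤ ‖(A ^ n - K) (u k)‖ := by
          intro k
          have e1 : u k = (A ^ n - K) (u k) - ((A ^ n) (u k) - u k) + K (u k) := by
            simp only [sub_apply]; abel
          have h2 : ‖u k‖ ≤ ‖(A ^ n - K) (u k)‖ + ‖(A ^ n) (u k) - u k‖ + ‖K (u k)‖ := by
            calc ‖u k‖ = ‖(A ^ n - K) (u k) - ((A ^ n) (u k) - u k) + K (u k)‖ := by rw [← e1]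
              _ ≤ ‖(A ^ n - K) (u k) - ((A ^ n) (u k) - u k)‖ + ‖K (u k)‖ := norm_add_le _ _
              _ ≤ ‖(A ^ n - K) (u k)‖ + ‖(A ^ n) (u k) - u k‖ + ‖K (u k)‖ := by
                  have h3 := norm_sub_le ((A ^ n - K) (u k)) ((A ^ n) (u k) - u k)
                  linarith
          rw [hu1 k] at h2
          linarith
        have hup : ∀ k, ‖(A ^ n - K) (u k)‖ ≤ ‖A ^ n - K‖ := by
          intro k
          have h4 := (A ^ n - K).le_opNorm (u k)
          rwa [hu1 k, mul_one] at h4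
        have hT1 : Tendsto (fun k => 1 - ‖(A ^ n) (u k) - u k‖ - ‖K (u k)‖) atTop
            (𝓝 (1 - 0 - 0)) := (tendsto_const_nhds.sub (hpowlim n)).sub hKnull
        have h3 : (1:ℝ) - 0 - 0 ≤ ‖A ^ n - K‖ :=
          le_of_tendsto hT1 (Eventually.of_forall fun k => (hlow k).trans (hup k))
        linarith
    have hfin : ∀ n : ℕ+, essentialNorm (A ^ (n : ℕ)) ^ (((n : ℕ) : ℝ)⁻¹) = 1 := by
      intro n
      rw [hEN]
      exact Real.one_rpow _
    unfold essentialSpectralRadius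
    rw [iInf_congr hfin]
    exact ciInf_const




end EssAux
end

/-- If `A` is a nonzero asymptotic limit of a contraction and `A` is not a finite-rank
projection, then the essential spectral radius of `A` equals `1`. -/
theorem essentialSpectralRadius_asymptotic_limit {H : Type*} [NormedAddCommGroup H]
    [InnerProductSpace ℂ H] [CompleteSpace H] (T : H →L[ℂ] H) (hT : ‖T‖ ≤ 1)
    (A : H →L[ℂ] H)
    (hA : ∀ x : H, Tendsto (fun n : ℕ => (adjoint (T ^ n) ∘L T ^ n) x) atTop (𝓝 (A x)))
    (hA0 : A ≠ 0)
    (hnotproj : ¬ (IsSelfAdjoint A ∧ IsIdempotentElem A ∧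
      FiniteDimensional ℂ (LinearMap.range (A : H →ₗ[ℂ] H)))) :
    essentialSpectralRadius A = 1 :=
  EssAux.main T hT A hA hnotproj
end

section
/- The contractive bilateral weighted shift T on ℓ²(ℤ) defined by T e_k = e_{k+1} for k > 0 and T e_k = (1/2) e_{k+1} for k ≤ 0 has asymptotic limit A_T given by A_T e_k = e_k for k > 0 and A_T e_k = (1/2)^{-2k+2} e_k = 4^{k-1} e_k for k ≤ 0; in particular A_T is not a projection. -/
open Filter Topology ContinuousLinearMap

noncomputable def wbsW (k : ℤ) : ℂ := if 0 < k then 1 else (2 : ℂ)⁻¹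

noncomputable def wbsC (n : ℕ) (k : ℤ) : ℂ := ∏ i ∈ Finset.range n, wbsW (k + i)

lemma wbsC_succ (n : ℕ) (k : ℤ) : wbsC (n + 1) k = wbsW k * wbsC n (k + 1) := by
  rw [wbsC, wbsC, Finset.prod_range_succ', mul_comm]
  congr 1
  · congr 1; push_cast; ring
  · exact Finset.prod_congr rfl fun i _ => by congr 1; push_cast; ring

section aux

variable {H : Type*} [NormedAddCommGroup H] [InnerProductSpace ℂ H] [CompleteSpace H]

omit [CompleteSpace H] in
lemma wbs_step (e : HilbertBasis ℤ ℂ H) (T : H →L[ℂ] H)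
    (hT1 : ∀ k : ℤ, 0 < k → T (e k) = e (k + 1))
    (hT2 : ∀ k : ℤ, k ≤ 0 → T (e k) = ((2 : ℂ)⁻¹) • e (k + 1)) (k : ℤ) :
    T (e k) = wbsW k • e (k + 1) := by
  unfold wbsW
  by_cases h : 0 < k
  · simp [h, hT1 k h]
  · simp [h, hT2 k (not_lt.mp h)]

omit [CompleteSpace H] in
lemma wbs_pow (e : HilbertBasis ℤ ℂ H) (T : H →L[ℂ] H)
    (hT1 : ∀ k : ℤ, 0 < k → T (e k) = e (k + 1))
    (hT2 : ∀ k : ℤ, k ≤ 0 → T (e k) = ((2 : ℂ)⁻¹) • e (k + 1)) (n : ℕ) (k : ℤ) :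
    (T ^ n) (e k) = wbsC n k • e (k + n) := by
  induction n generalizing k with
  | zero => simp [wbsC]
  | succ n ih =>
      rw [pow_succ, ContinuousLinearMap.mul_apply,
        wbs_step e T hT1 hT2 k, map_smul, ih (k + 1), smul_smul, wbsC_succ]
      congr 2
      push_cast; ring

lemma wbs_key (e : HilbertBasis ℤ ℂ H) (T : H →L[ℂ] H)
    (hT1 : ∀ k : ℤ, 0 < k → T (e k) = e (k + 1))
    (hT2 : ∀ k : ℤ, k ≤ 0 → T (e k) = ((2 : ℂ)⁻¹) • e (k + 1)) (n : ℕ) (k : ℤ) :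
    (adjoint (T ^ n) ∘L T ^ n) (e k) = (star (wbsC n k) * wbsC n k) • e k := by
  apply e.repr.injective
  ext j
  rw [e.repr_apply_apply, e.repr_apply_apply]
  rw [ContinuousLinearMap.comp_apply, ContinuousLinearMap.adjoint_inner_right]
  rw [wbs_pow e T hT1 hT2 n k, wbs_pow e T hT1 hT2 n j]
  rw [inner_smul_left, inner_smul_right, inner_smul_right]
  rw [orthonormal_iff_ite.mp e.orthonormal, orthonormal_iff_ite.mp e.orthonormal]
  by_cases h : j = k
  · subst h; simp [mul_comm]
  · have : ¬ (j + (n:ℤ) = k + n) := by omega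
    simp [h, this]

end aux

/-- The contractive bilateral weighted shift `T e_k = e_{k+1}` (`k > 0`),
`T e_k = (1/2) e_{k+1}` (`k ≤ 0`) has asymptotic limit `A_T e_k = e_k` for `k > 0` and
`A_T e_k = (1/2)^{-2k+2} e_k = 4^{k-1} e_k` for `k ≤ 0`; in particular `A_T` is not a
projection. -/
theorem asymptotic_limit_weighted_bilateral_shift {H : Type*} [NormedAddCommGroup H]
    [InnerProductSpace ℂ H] [CompleteSpace H] (e : HilbertBasis ℤ ℂ H)
    (T : H →L[ℂ] H) (hT : ‖T‖ ≤ 1)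
    (hT1 : ∀ k : ℤ, 0 < k → T (e k) = e (k + 1))
    (hT2 : ∀ k : ℤ, k ≤ 0 → T (e k) = ((2 : ℂ)⁻¹) • e (k + 1))
    (A : H →L[ℂ] H)
    (hA : ∀ x : H, Tendsto (fun n : ℕ => (adjoint (T ^ n) ∘L T ^ n) x) atTop (𝓝 (A x))) :
    (∀ k : ℤ, 0 < k → A (e k) = e k) ∧
    (∀ k : ℤ, k ≤ 0 → A (e k) = (((2 : ℂ)⁻¹) ^ (-2 * k + 2)) • e k) ∧
    (∀ k : ℤ, k ≤ 0 → A (e k) = ((4 : ℂ) ^ (k - 1)) • e k) ∧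
    ¬ IsIdempotentElem A := by
  have hpos : ∀ k : ℤ, 0 < k → A (e k) = e k := by
    intro k hk
    have hc : ∀ n : ℕ, wbsC n k = 1 := by
      intro n
      rw [wbsC]
      apply Finset.prod_eq_one
      intro i _
      simp only [wbsW]
      rw [if_pos (by positivity)]
    have hconst : ∀ n : ℕ, (adjoint (T ^ n) ∘L T ^ n) (e k) = e k := by
      intro n
      rw [wbs_key e T hT1 hT2 n k, hc, star_one, one_mul, one_smul]
    have := hA (e k)
    rw [funext hconst] at this
    exact tendsto_nhds_unique this tendsto_const_nhds
  have hneg : ∀ k : ℤ, k ≤ 0 → A (e k) = (((2 : ℂ)⁻¹) ^ (-2 * k + 2)) • e k := by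
    intro k hk
    set m : ℕ := (1 - k).toNat with hm
    have hmk : (m : ℤ) = 1 - k := Int.toNat_of_nonneg (by omega)
    have hc : ∀ n : ℕ, m ≤ n → wbsC n k = ((2:ℂ)⁻¹) ^ m := by
      intro n hn
      rw [wbsC]
      obtain ⟨d, rfl⟩ := Nat.exists_eq_add_of_le hn
      rw [Finset.prod_range_add]
      have h1 : ∀ i ∈ Finset.range m, wbsW (k + i) = (2:ℂ)⁻¹ := by
        intro i hi
        have := Finset.mem_range.mp hi
        simp only [wbsW]
        rw [if_neg (by omega)]
      have h2 : ∏ i ∈ Finset.range d, wbsW (k + ((m + i : ℕ) : ℤ)) = 1 := by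
        apply Finset.prod_eq_one
        intro i _
        simp only [wbsW]
        rw [if_pos (by push_cast; omega)]
      rw [h2, mul_one, Finset.prod_congr rfl h1, Finset.prod_const, Finset.card_range]
    have hconst : ∀ n : ℕ, m ≤ n →
        (adjoint (T ^ n) ∘L T ^ n) (e k) = (((2 : ℂ)⁻¹) ^ (-2 * k + 2)) • e k := by
      intro n hn
      rw [wbs_key e T hT1 hT2 n k, hc n hn]
      congr 1
      have hstar : star (((2:ℂ)⁻¹) ^ m) = ((2:ℂ)⁻¹) ^ m := by simp
      rw [hstar, ← pow_add]
      have he : (-2 * k + 2 : ℤ) = ((m + m : ℕ) : ℤ) := by push_cast; omega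
      rw [he, zpow_natCast]
    have h2 : Tendsto (fun n : ℕ => (adjoint (T ^ n) ∘L T ^ n) (e k)) atTop
        (𝓝 ((((2 : ℂ)⁻¹) ^ (-2 * k + 2)) • e k)) := by
      apply Tendsto.congr' _ tendsto_const_nhds
      filter_upwards [eventually_ge_atTop m] with n hn
      exact (hconst n hn).symm
    exact tendsto_nhds_unique (hA (e k)) h2
  have hpow : ∀ k : ℤ, (((2 : ℂ)⁻¹) ^ (-2 * k + 2)) = (4 : ℂ) ^ (k - 1) := by
    intro k
    have h4 : (4 : ℂ) = 2 * 2 := by norm_num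
    rw [h4, mul_zpow, ← zpow_add₀ (two_ne_zero), inv_zpow, ← zpow_neg]
    congr 1
    ring
  refine ⟨hpos, hneg, fun k hk => by rw [hneg k hk, hpow], ?_⟩
  intro hid
  have h0 : A (e 0) = ((2:ℂ)⁻¹ ^ (2:ℤ)) • e 0 := by
    have := hneg 0 le_rfl
    simpa using this
  have key := congrArg (fun f : H →L[ℂ] H => f (e 0)) hid
  simp only [ContinuousLinearMap.mul_apply] at key
  rw [h0, map_smul, h0, smul_smul] at key
  have hne : ((2:ℂ)⁻¹ ^ (2:ℤ) * (2:ℂ)⁻¹ ^ (2:ℤ)) ≠ ((2:ℂ)⁻¹ ^ (2:ℤ)) := by norm_num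
  have he0 : e 0 ≠ 0 := by
    intro h
    have h1 := e.orthonormal.1 0
    rw [h] at h1
    simp at h1
  exact hne (smul_left_injective ℂ he0 key)
end

section
/- If T is a contraction on a finite-dimensional Hilbert space, then its asymptotic limit A_T is an orthogonal projection. -/
open Filter Topology ContinuousLinearMap

section Aux

variable {H : Type*} [NormedAddCommGroup H] [InnerProductSpace ℂ H] [FiniteDimensional ℂ H]

private lemma aux_pow_norm_le (T : H →L[ℂ] H) (hT : ‖T‖ ≤ 1) (n : ℕ) : ‖T ^ n‖ ≤ 1 := by
  induction n with
  | zero => rw [pow_zero, ContinuousLinearMap.one_def]; exact norm_id_le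
  | succ n ih =>
    calc ‖T ^ (n+1)‖ ≤ ‖T ^ n‖ * ‖T‖ := by rw [pow_succ]; exact norm_mul_le _ _
    _ ≤ 1 := by nlinarith [norm_nonneg (T^n), norm_nonneg T]

private lemma aux_isom_fix (S : H →L[ℂ] H) (hS : ‖S‖ ≤ 1) (x : H) (hx : ‖S x‖ = ‖x‖) :
    adjoint S (S x) = x := by
  have h1 : ‖adjoint S (S x)‖ ≤ ‖x‖ := by
    calc ‖adjoint S (S x)‖ ≤ ‖adjoint S‖ * ‖S x‖ := le_opNorm _ _
    _ ≤ 1 * ‖x‖ := by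
        rw [ContinuousLinearMap.adjoint.norm_map, hx]
        exact mul_le_mul_of_nonneg_right hS (norm_nonneg x)
    _ = ‖x‖ := one_mul _
  have h2 : inner ℂ (adjoint S (S x)) x = (‖x‖:ℂ)^2 := by
    rw [adjoint_inner_left, inner_self_eq_norm_sq_to_K, hx]; norm_cast
  have h3 : ‖adjoint S (S x) - x‖^2 ≤ 0 := by
    rw [@norm_sub_sq ℂ]
    have hre : RCLike.re (inner ℂ (adjoint S (S x)) x : ℂ) = ‖x‖^2 := by rw [h2]; norm_cast
    rw [hre]
    nlinarith [norm_nonneg (adjoint S (S x)), norm_nonneg x]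
  have h4 : ‖adjoint S (S x) - x‖ = 0 := by
    nlinarith [sq_nonneg ‖adjoint S (S x) - x‖, norm_nonneg (adjoint S (S x) - x)]
  rwa [norm_eq_zero, sub_eq_zero] at h4

end Aux

set_option maxHeartbeats 1000000 in
/-- On a finite-dimensional complex Hilbert space, the asymptotic limit of any contraction
is an orthogonal projection. -/
theorem asymptotic_limit_projection_of_finiteDimensional {H : Type*} [NormedAddCommGroup H]
    [InnerProductSpace ℂ H] [FiniteDimensional ℂ H]
    (T : H →L[ℂ] H) (hT : ‖T‖ ≤ 1) (A : H →L[ℂ] H)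
    (hA : ∀ x : H, Tendsto (fun n : ℕ => (adjoint (T ^ n) ∘L T ^ n) x) atTop (𝓝 (A x))) :
    IsSelfAdjoint A ∧ IsIdempotentElem A := by
  haveI : ProperSpace H := FiniteDimensional.proper ℂ H
  have hTn : ∀ n : ℕ, ‖T ^ n‖ ≤ 1 := aux_pow_norm_le T hT
  have hTnx : ∀ (n : ℕ) (x : H), ‖(T ^ n) x‖ ≤ ‖x‖ := by
    intro n x
    calc ‖(T ^ n) x‖ ≤ ‖T ^ n‖ * ‖x‖ := le_opNorm _ _
    _ ≤ 1 * ‖x‖ := mul_le_mul_of_nonneg_right (hTn n) (norm_nonneg x)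
    _ = ‖x‖ := one_mul _
  have hmono : ∀ x : H, Antitone (fun n : ℕ => ‖(T ^ n) x‖) := by
    intro x
    apply antitone_nat_of_succ_le
    intro n
    have h1 : (T ^ (n+1)) x = T ((T ^ n) x) := by rw [pow_succ']; rfl
    rw [h1]
    calc ‖T ((T ^ n) x)‖ ≤ ‖T‖ * ‖(T ^ n) x‖ := le_opNorm _ _
    _ ≤ 1 * ‖(T ^ n) x‖ := mul_le_mul_of_nonneg_right hT (norm_nonneg _)
    _ = _ := one_mul _
  -- the subspace on which T acts isometrically forever
  set E : Submodule ℂ H :=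
    { carrier := {x : H | ∀ n : ℕ, adjoint (T ^ n) ((T ^ n) x) = x}
      add_mem' := fun ha hb n => by simp only [map_add, ha n, hb n]
      zero_mem' := fun n => by simp
      smul_mem' := fun c a ha n => by simp only [map_smul, ha n] } with hEdef
  have hEmem : ∀ x : H, x ∈ E ↔ ∀ n : ℕ, adjoint (T ^ n) ((T ^ n) x) = x := fun x => Iff.rfl
  have hEnorm : ∀ x ∈ E, ∀ n : ℕ, ‖(T ^ n) x‖ = ‖x‖ := by
    intro x hx n
    have h1 : (inner ℂ ((T ^ n) x) ((T ^ n) x) : ℂ) = inner ℂ x x := by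
      rw [← adjoint_inner_left, (hEmem x).1 hx n]
    have h2 : (‖(T ^ n) x‖ : ℝ)^2 = ‖x‖^2 := by
      rw [inner_self_eq_norm_sq_to_K, inner_self_eq_norm_sq_to_K] at h1
      exact_mod_cast h1
    nlinarith [norm_nonneg ((T ^ n) x), norm_nonneg x]
  have hmemnorm : ∀ x : H, (∀ n : ℕ, ‖(T ^ n) x‖ = ‖x‖) → x ∈ E := by
    intro x hx
    rw [hEmem]
    exact fun n => aux_isom_fix (T ^ n) (hTn n) x (hx n)
  have hAE : ∀ u ∈ E, A u = u := by
    intro u hu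
    have h1 : Tendsto (fun n : ℕ => (adjoint (T ^ n) ∘L T ^ n) u) atTop (𝓝 u) := by
      have : ∀ n : ℕ, (adjoint (T ^ n) ∘L T ^ n) u = u := fun n => (hEmem u).1 hu n
      simp only [this]
      exact tendsto_const_nhds
    exact tendsto_nhds_unique (hA u) h1
  have hTE : ∀ u ∈ E, T u ∈ E := by
    intro u hu
    apply hmemnorm
    intro n
    have h1 : (T ^ n) (T u) = (T ^ (n+1)) u := by rw [pow_succ]; rfl
    have h2 : T u = (T ^ 1) u := by rw [pow_one]
    rw [h1, hEnorm u hu (n+1), h2, hEnorm u hu 1]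
  have hTsurjE : ∀ u ∈ E, ∃ w ∈ E, T w = u := by
    intro u hu
    set f : E →ₗ[ℂ] E := (T : H →ₗ[ℂ] H).restrict (fun x hx => hTE x hx) with hf
    have hinj : Function.Injective f := by
      rw [← LinearMap.ker_eq_bot, LinearMap.ker_eq_bot']
      intro a ha
      have h1 : T (a : H) = 0 := congrArg Subtype.val ha
      have h2 : ‖(T ^ 1) (a : H)‖ = ‖(a : H)‖ := hEnorm _ a.2 1
      rw [pow_one, h1, norm_zero] at h2
      exact Subtype.ext (by rw [Submodule.coe_zero, ← norm_eq_zero]; exact h2.symm)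
    obtain ⟨w, hw⟩ := (LinearMap.injective_iff_surjective.mp hinj) ⟨u, hu⟩
    exact ⟨(w : H), w.2, congrArg Subtype.val hw⟩
  have hTstarE : ∀ u ∈ E, adjoint T u ∈ E := by
    intro u hu
    obtain ⟨w, hw, hwu⟩ := hTsurjE u hu
    have h1 : adjoint T u = w := by
      rw [← hwu]
      have := (hEmem w).1 hw 1
      rwa [pow_one] at this
    rw [h1]; exact hw
  have hEperp : ∀ n : ℕ, ∀ v ∈ Eᗮ, (T ^ n) v ∈ Eᗮ := by
    intro n
    induction n with
    | zero => intro v hv; simpa using hv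
    | succ n ih =>
      intro v hv
      have h1 : (T ^ (n+1)) v = T ((T ^ n) v) := by rw [pow_succ']; rfl
      rw [h1]
      rw [Submodule.mem_orthogonal]
      intro u hu
      rw [← adjoint_inner_left]
      exact (Submodule.mem_orthogonal _ _).1 (ih v hv) _ (hTstarE u hu)
  have hlim0 : ∀ v ∈ Eᗮ, Tendsto (fun n : ℕ => ‖(T ^ n) v‖) atTop (𝓝 0) := by
    intro v hv
    set c : ℝ := ⨅ n : ℕ, ‖(T ^ n) v‖ with hcdef
    have hbdd : BddBelow (Set.range fun n : ℕ => ‖(T ^ n) v‖) := by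
      refine ⟨0, ?_⟩
      rintro y ⟨n, rfl⟩
      exact norm_nonneg _
    have hc : Tendsto (fun n : ℕ => ‖(T ^ n) v‖) atTop (𝓝 c) :=
      tendsto_atTop_ciInf (hmono v) hbdd
    have hb : ∀ n : ℕ, (T ^ n) v ∈ Metric.closedBall (0 : H) ‖v‖ := by
      intro n
      rw [Metric.mem_closedBall, dist_zero_right]
      exact hTnx n v
    obtain ⟨w, -, φ, hφ, hw⟩ :=
      tendsto_subseq_of_bounded (Metric.isBounded_closedBall) hb
    have hwnorm : ∀ m : ℕ, ‖(T ^ m) w‖ = c := by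
      intro m
      have hφtop : Tendsto (fun k : ℕ => m + φ k) atTop atTop :=
        tendsto_atTop_mono (fun k => Nat.le_add_left (φ k) m) hφ.tendsto_atTop
      have h1 : Tendsto (fun k : ℕ => ‖(T ^ (m + φ k)) v‖) atTop (𝓝 c) := hc.comp hφtop
      have h2 : Tendsto (fun k : ℕ => ‖(T ^ (m + φ k)) v‖) atTop (𝓝 ‖(T ^ m) w‖) := by
        have he : ∀ k : ℕ, (T ^ (m + φ k)) v = (T ^ m) ((T ^ (φ k)) v) := by
          intro k; rw [pow_add]; rfl
        simp only [he]
        exact (((T ^ m).continuous.tendsto w).comp hw).norm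
      exact tendsto_nhds_unique h2 h1
    have hw0 : ‖w‖ = c := by have := hwnorm 0; rwa [pow_zero, ContinuousLinearMap.one_apply] at this
    have hwE : w ∈ E := hmemnorm w (fun n => by rw [hwnorm n, hw0])
    have hwperp : w ∈ Eᗮ := by
      have hclosed : IsClosed (Eᗮ : Set H) := E.isClosed_orthogonal
      exact hclosed.mem_of_tendsto hw (Filter.Eventually.of_forall fun k => hEperp (φ k) v hv)
    have hwzero : w = 0 := by
      have := (Submodule.mem_orthogonal _ _).1 hwperp w hwE
      exact inner_self_eq_zero.mp this
    rw [hwzero, norm_zero] at hw0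
    rwa [← hw0] at hc
  have hAperp : ∀ v ∈ Eᗮ, A v = 0 := by
    intro v hv
    have h2 : Tendsto (fun n : ℕ => (adjoint (T ^ n) ∘L T ^ n) v) atTop (𝓝 0) := by
      rw [tendsto_zero_iff_norm_tendsto_zero]
      refine squeeze_zero (fun n => norm_nonneg _) (fun n => ?_) (hlim0 v hv)
      calc ‖(adjoint (T ^ n) ∘L T ^ n) v‖ = ‖adjoint (T ^ n) ((T ^ n) v)‖ := rfl
      _ ≤ ‖adjoint (T ^ n)‖ * ‖(T ^ n) v‖ := le_opNorm _ _
      _ ≤ 1 * ‖(T ^ n) v‖ := by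
          refine mul_le_mul_of_nonneg_right ?_ (norm_nonneg _)
          rw [ContinuousLinearMap.adjoint.norm_map]; exact hTn n
      _ = ‖(T ^ n) v‖ := one_mul _
    exact tendsto_nhds_unique (hA v) h2
  have hAproj : ∀ x : H, A x = (E.orthogonalProjectionOnto x : H) := by
    intro x
    have hv : x - (E.orthogonalProjectionOnto x : H) ∈ Eᗮ := E.sub_starProjection_mem_orthogonal x
    calc A x = A ((E.orthogonalProjectionOnto x : H) + (x - (E.orthogonalProjectionOnto x : H))) := by
          rw [add_sub_cancel]
    _ = A (E.orthogonalProjectionOnto x : H) + A (x - (E.orthogonalProjectionOnto x : H)) := map_add _ _ _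
    _ = (E.orthogonalProjectionOnto x : H) + 0 := by
          rw [hAE _ (SetLike.coe_mem _), hAperp _ hv]
    _ = (E.orthogonalProjectionOnto x : H) := add_zero _
  constructor
  · rw [ContinuousLinearMap.isSelfAdjoint_iff_isSymmetric]
    intro x y
    show (inner ℂ (A x) y : ℂ) = inner ℂ x (A y)
    rw [hAproj x, hAproj y]
    exact E.inner_starProjection_left_eq_right x y
  · rw [IsIdempotentElem]
    ext x
    show A (A x) = A x
    rw [hAproj x, hAE _ (SetLike.coe_mem _)]
end

section
/- Let A be a positive diagonal contraction on a separable infinite-dimensional Hilbert space whose eigenvalues can be arranged in an increasing sequence λ_j with 0 < λ_j < 1 and λ_j ↗ 1 (listed with multiplicity). Then A is the uniform asymptotic limit of a contraction of class C_{·0}. -/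
open Filter Topology ContinuousLinearMap
set_option maxHeartbeats 1000000

noncomputable section

namespace DiagAux

abbrev K := lp (fun _ : ℕ => ℂ) 2

lemma htwo : (0:ℝ) < (2 : ENNReal).toReal := by norm_num

lemma summable_sq (f : K) : Summable fun i => ‖f i‖ ^ (2:ℝ) := by
  have := (lp.memℓp f).summable htwo
  simpa using this

lemma norm_sq_eq (f : K) : ‖f‖ ^ (2:ℝ) = ∑' i, ‖f i‖ ^ (2:ℝ) := by
  have := lp.norm_rpow_eq_tsum (p := 2) htwo f
  simpa using this

lemma norm_le_of (f : K) {C : ℝ} (hC : 0 ≤ C)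
    (h : ∑' i, ‖f i‖ ^ (2:ℝ) ≤ C ^ (2:ℝ)) : ‖f‖ ≤ C := by
  apply lp.norm_le_of_tsum_le htwo hC
  simpa using h

lemma rpow_two_mono {a b : ℝ} (ha : 0 ≤ a) (h : a ≤ b) : a ^ (2:ℝ) ≤ b ^ (2:ℝ) :=
  Real.rpow_le_rpow ha h (by norm_num)

lemma norm_mul_le_one {w : ℂ} (hw : ‖w‖ ≤ 1) (z : ℂ) : ‖w * z‖ ≤ ‖z‖ := by
  rw [norm_mul]
  calc ‖w‖ * ‖z‖ ≤ 1 * ‖z‖ := mul_le_mul_of_nonneg_right hw (norm_nonneg _)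
    _ = ‖z‖ := one_mul _

/-- forward weighted shift, raw function -/
def shiftFun (w : ℕ → ℂ) (f : ℕ → ℂ) : ℕ → ℂ
  | 0 => 0
  | (k+1) => w k * f k

lemma memℓp_shift (w : ℕ → ℂ) (hw : ∀ k, ‖w k‖ ≤ 1) (f : K) :
    Memℓp (shiftFun w f) 2 := by
  apply memℓp_gen
  have h1 : Summable fun n => ‖shiftFun w (⇑f) (n + 1)‖ ^ (2:ℝ) := by
    apply Summable.of_nonneg_of_le (fun n => Real.rpow_nonneg (norm_nonneg _) _)
      (fun n => ?_) (summable_sq f)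
    exact rpow_two_mono (norm_nonneg _) (norm_mul_le_one (hw n) _)
  have h2 := (summable_nat_add_iff
    (f := fun n => ‖shiftFun w (⇑f) n‖ ^ (2:ℝ)) 1).mp h1
  simpa using h2

def shiftLM (w : ℕ → ℂ) (hw : ∀ k, ‖w k‖ ≤ 1) : K →ₗ[ℂ] K where
  toFun f := ⟨shiftFun w f, memℓp_shift w hw f⟩
  map_add' f g := by
    apply lp.ext
    funext m
    cases m with
    | zero => simp [shiftFun, lp.coeFn_add, Pi.add_apply]; exact (add_zero 0).symm
    | succ k => simp [shiftFun, lp.coeFn_add, Pi.add_apply]; exact mul_add _ _ _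
  map_smul' c f := by
    apply lp.ext
    funext m
    cases m with
    | zero => simp [shiftFun, lp.coeFn_smul, Pi.smul_apply]
    | succ k => simp [shiftFun, lp.coeFn_smul, Pi.smul_apply]; ring

lemma shiftLM_norm_le (w : ℕ → ℂ) (hw : ∀ k, ‖w k‖ ≤ 1) (f : K) :
    ‖shiftLM w hw f‖ ≤ 1 * ‖f‖ := by
  rw [one_mul]
  apply norm_le_of _ (norm_nonneg f)
  have hg : (⇑(shiftLM w hw f) : ℕ → ℂ) = shiftFun w ⇑f := rfl
  rw [hg]
  have hsum : Summable fun n => ‖shiftFun w (⇑f) n‖ ^ (2:ℝ) := by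
    have := (memℓp_shift w hw f).summable htwo
    simpa using this
  have hs1 : Summable fun n => ‖shiftFun w (⇑f) (n+1)‖ ^ (2:ℝ) :=
    (summable_nat_add_iff (f := fun n => ‖shiftFun w (⇑f) n‖ ^ (2:ℝ)) 1).mpr hsum
  calc ∑' m, ‖shiftFun w (⇑f) m‖ ^ (2:ℝ)
      = ‖shiftFun w (⇑f) 0‖ ^ (2:ℝ) + ∑' m, ‖shiftFun w (⇑f) (m+1)‖ ^ (2:ℝ) :=
        Summable.tsum_eq_zero_add hsum
    _ = ∑' m, ‖shiftFun w (⇑f) (m+1)‖ ^ (2:ℝ) := by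
        have : ‖shiftFun w (⇑f) 0‖ ^ (2:ℝ) = 0 := by
          show ‖(0:ℂ)‖ ^ (2:ℝ) = 0
          simp [Real.zero_rpow (by norm_num : (2:ℝ) ≠ 0)]
        rw [this, zero_add]
    _ ≤ ∑' m, ‖f m‖ ^ (2:ℝ) := by
        apply Summable.tsum_le_tsum _ hs1 (summable_sq f)
        intro m
        exact rpow_two_mono (norm_nonneg _) (norm_mul_le_one (hw m) _)
    _ = ‖f‖ ^ (2:ℝ) := (norm_sq_eq f).symm

def shift (w : ℕ → ℂ) (hw : ∀ k, ‖w k‖ ≤ 1) : K →L[ℂ] K :=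
  LinearMap.mkContinuous (shiftLM w hw) 1 (shiftLM_norm_le w hw)

lemma shift_norm_le (w : ℕ → ℂ) (hw : ∀ k, ‖w k‖ ≤ 1) : ‖shift w hw‖ ≤ 1 :=
  LinearMap.mkContinuous_norm_le _ zero_le_one _

@[simp] lemma shift_apply_zero (w : ℕ → ℂ) (hw : ∀ k, ‖w k‖ ≤ 1) (f : K) :
    (shift w hw f : ℕ → ℂ) 0 = 0 := rfl

@[simp] lemma shift_apply_succ (w : ℕ → ℂ) (hw : ∀ k, ‖w k‖ ≤ 1) (f : K) (k : ℕ) :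
    (shift w hw f : ℕ → ℂ) (k+1) = w k * f k := rfl

/-- backward weighted shift -/
def coshiftFun (w : ℕ → ℂ) (f : ℕ → ℂ) : ℕ → ℂ := fun n => w n * f (n+1)

lemma memℓp_coshift (w : ℕ → ℂ) (hw : ∀ k, ‖w k‖ ≤ 1) (f : K) :
    Memℓp (coshiftFun w f) 2 := by
  apply memℓp_gen
  have hs : Summable fun n => ‖f (n+1)‖ ^ (2:ℝ) :=
    (summable_nat_add_iff (f := fun n => ‖f n‖ ^ (2:ℝ)) 1).mpr (summable_sq f)
  have : Summable fun n => ‖coshiftFun w (⇑f) n‖ ^ (2:ℝ) := by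
    apply Summable.of_nonneg_of_le (fun n => Real.rpow_nonneg (norm_nonneg _) _)
      (fun n => ?_) hs
    exact rpow_two_mono (norm_nonneg _) (norm_mul_le_one (hw n) _)
  simpa using this

def coshiftLM (w : ℕ → ℂ) (hw : ∀ k, ‖w k‖ ≤ 1) : K →ₗ[ℂ] K where
  toFun f := ⟨coshiftFun w f, memℓp_coshift w hw f⟩
  map_add' f g := by
    apply lp.ext; funext m
    simp [coshiftFun, lp.coeFn_add, Pi.add_apply]; exact mul_add _ _ _
  map_smul' c f := by
    apply lp.ext; funext m
    simp [coshiftFun, lp.coeFn_smul, Pi.smul_apply]; ring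

lemma coshiftLM_norm_le (w : ℕ → ℂ) (hw : ∀ k, ‖w k‖ ≤ 1) (f : K) :
    ‖coshiftLM w hw f‖ ≤ 1 * ‖f‖ := by
  rw [one_mul]
  apply norm_le_of _ (norm_nonneg f)
  have hg : (⇑(coshiftLM w hw f) : ℕ → ℂ) = coshiftFun w ⇑f := rfl
  rw [hg]
  have hsum : Summable fun n => ‖coshiftFun w (⇑f) n‖ ^ (2:ℝ) := by
    have := (memℓp_coshift w hw f).summable htwo
    simpa using this
  have hs : Summable fun n => ‖f (n+1)‖ ^ (2:ℝ) :=
    (summable_nat_add_iff (f := fun n => ‖f n‖ ^ (2:ℝ)) 1).mpr (summable_sq f)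
  calc ∑' m, ‖coshiftFun w (⇑f) m‖ ^ (2:ℝ)
      ≤ ∑' m, ‖f (m+1)‖ ^ (2:ℝ) := by
        apply Summable.tsum_le_tsum _ hsum hs
        intro m
        exact rpow_two_mono (norm_nonneg _) (norm_mul_le_one (hw m) _)
    _ ≤ ∑' m, ‖f m‖ ^ (2:ℝ) := by
        apply Summable.tsum_le_tsum_of_inj (fun n => n + 1)
          (fun a b h => Nat.succ_injective h)
          (fun c _ => Real.rpow_nonneg (norm_nonneg _) _)
          (fun n => le_rfl) hs (summable_sq f)
    _ = ‖f‖ ^ (2:ℝ) := (norm_sq_eq f).symm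

def coshift (w : ℕ → ℂ) (hw : ∀ k, ‖w k‖ ≤ 1) : K →L[ℂ] K :=
  LinearMap.mkContinuous (coshiftLM w hw) 1 (coshiftLM_norm_le w hw)

@[simp] lemma coshift_apply (w : ℕ → ℂ) (hw : ∀ k, ‖w k‖ ≤ 1) (f : K) (m : ℕ) :
    (coshift w hw f : ℕ → ℂ) m = w m * f (m+1) := rfl

/-- diagonal operator -/
def diagFun (d : ℕ → ℂ) (f : ℕ → ℂ) : ℕ → ℂ := fun n => d n * f n

lemma memℓp_diag (d : ℕ → ℂ) {C : ℝ} (hd : ∀ k, ‖d k‖ ≤ C) (f : K) :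
    Memℓp (diagFun d f) 2 := by
  have hC : 0 ≤ C := le_trans (norm_nonneg _) (hd 0)
  apply memℓp_gen
  have : Summable fun n => ‖diagFun d (⇑f) n‖ ^ (2:ℝ) := by
    apply Summable.of_nonneg_of_le (fun n => Real.rpow_nonneg (norm_nonneg _) _)
      (fun n => ?_) ((summable_sq f).mul_left (C ^ (2:ℝ)))
    have h1 : ‖d n * f n‖ ≤ C * ‖f n‖ := by
      rw [norm_mul]
      exact mul_le_mul_of_nonneg_right (hd n) (norm_nonneg _)
    calc ‖diagFun d (⇑f) n‖ ^ (2:ℝ) ≤ (C * ‖f n‖) ^ (2:ℝ) :=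
          rpow_two_mono (norm_nonneg _) h1
      _ = C ^ (2:ℝ) * ‖f n‖ ^ (2:ℝ) := Real.mul_rpow hC (norm_nonneg _)
  simpa using this

def diagLM (d : ℕ → ℂ) {C : ℝ} (hd : ∀ k, ‖d k‖ ≤ C) : K →ₗ[ℂ] K where
  toFun f := ⟨diagFun d f, memℓp_diag d hd f⟩
  map_add' f g := by
    apply lp.ext; funext m
    simp [diagFun, lp.coeFn_add, Pi.add_apply]; exact mul_add _ _ _
  map_smul' c f := by
    apply lp.ext; funext m
    simp [diagFun, lp.coeFn_smul, Pi.smul_apply]; ring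

lemma diagLM_norm_le (d : ℕ → ℂ) {C : ℝ} (hd : ∀ k, ‖d k‖ ≤ C) (f : K) :
    ‖diagLM d hd f‖ ≤ C * ‖f‖ := by
  have hC : 0 ≤ C := le_trans (norm_nonneg _) (hd 0)
  apply norm_le_of _ (mul_nonneg hC (norm_nonneg f))
  have hg : (⇑(diagLM d hd f) : ℕ → ℂ) = diagFun d ⇑f := rfl
  rw [hg]
  have hsum : Summable fun n => ‖diagFun d (⇑f) n‖ ^ (2:ℝ) := by
    have := (memℓp_diag d hd f).summable htwo
    simpa using this
  calc ∑' m, ‖diagFun d (⇑f) m‖ ^ (2:ℝ)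
      ≤ ∑' m, C ^ (2:ℝ) * ‖f m‖ ^ (2:ℝ) := by
        apply Summable.tsum_le_tsum _ hsum ((summable_sq f).mul_left _)
        intro m
        have h1 : ‖d m * f m‖ ≤ C * ‖f m‖ := by
          rw [norm_mul]
          exact mul_le_mul_of_nonneg_right (hd m) (norm_nonneg _)
        calc ‖diagFun d (⇑f) m‖ ^ (2:ℝ) ≤ (C * ‖f m‖) ^ (2:ℝ) :=
              rpow_two_mono (norm_nonneg _) h1
          _ = C ^ (2:ℝ) * ‖f m‖ ^ (2:ℝ) := Real.mul_rpow hC (norm_nonneg _)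
    _ = C ^ (2:ℝ) * ∑' m, ‖f m‖ ^ (2:ℝ) := tsum_mul_left
    _ = (C * ‖f‖) ^ (2:ℝ) := by
        rw [Real.mul_rpow hC (norm_nonneg _), norm_sq_eq f]

def diag (d : ℕ → ℂ) {C : ℝ} (hd : ∀ k, ‖d k‖ ≤ C) : K →L[ℂ] K :=
  LinearMap.mkContinuous (diagLM d hd) C (diagLM_norm_le d hd)

@[simp] lemma diag_apply (d : ℕ → ℂ) {C : ℝ} (hd : ∀ k, ‖d k‖ ≤ C) (f : K) (m : ℕ) :
    (diag d hd f : ℕ → ℂ) m = d m * f m := rfl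

open scoped ComplexConjugate in
lemma inner_coshift_shift (w : ℕ → ℂ) (hw : ∀ k, ‖w k‖ ≤ 1)
    (hr : ∀ k, conj (w k) = w k) (f g : K) :
    (inner ℂ (coshift w hw f) g : ℂ) = inner ℂ f (shift w hw g) := by
  rw [lp.inner_eq_tsum, lp.inner_eq_tsum]
  have hsum : Summable fun n => (inner ℂ (f n) ((shift w hw g : ℕ → ℂ) n) : ℂ) :=
    lp.summable_inner f (shift w hw g)
  rw [Summable.tsum_eq_zero_add hsum]
  have h0 : (inner ℂ (f 0) ((shift w hw g : ℕ → ℂ) 0) : ℂ) = 0 := by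
    rw [shift_apply_zero]
    exact inner_zero_right _
  rw [h0, zero_add]
  apply tsum_congr
  intro n
  rw [shift_apply_succ, coshift_apply, RCLike.inner_apply, RCLike.inner_apply,
    map_mul, hr n]
  ring

lemma coshift_pow_apply_le (w : ℕ → ℂ) (hw : ∀ k, ‖w k‖ ≤ 1) :
    ∀ (n : ℕ) (f : K) (m : ℕ), ‖((coshift w hw ^ n) f : ℕ → ℂ) m‖ ≤ ‖f (m + n)‖
  | 0, f, m => by
      rw [pow_zero]
      simp
  | (n+1), f, m => by
      rw [pow_succ']
      have h1 : ((coshift w hw * coshift w hw ^ n) f : ℕ → ℂ) m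
          = w m * ((coshift w hw ^ n) f : ℕ → ℂ) (m + 1) := by
        rw [ContinuousLinearMap.mul_apply, coshift_apply]
      rw [h1]
      calc ‖w m * ((coshift w hw ^ n) f : ℕ → ℂ) (m + 1)‖
          ≤ ‖((coshift w hw ^ n) f : ℕ → ℂ) (m + 1)‖ :=
            norm_mul_le_one (hw m) _
        _ ≤ ‖f (m + 1 + n)‖ := coshift_pow_apply_le w hw n f (m + 1)
        _ = ‖f (m + (n + 1))‖ := by
            have : m + 1 + n = m + (n + 1) := by omega
            rw [this]

lemma coshift_pow_norm_le (w : ℕ → ℂ) (hw : ∀ k, ‖w k‖ ≤ 1) (n : ℕ) (f : K) :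
    ‖(coshift w hw ^ n) f‖ ≤ Real.sqrt (∑' m, ‖f (m + n)‖ ^ (2:ℝ)) := by
  have hs : Summable fun m => ‖f (m + n)‖ ^ (2:ℝ) :=
    (summable_nat_add_iff (f := fun m => ‖f m‖ ^ (2:ℝ)) n).mpr (summable_sq f)
  have ht : (0:ℝ) ≤ ∑' m, ‖f (m + n)‖ ^ (2:ℝ) :=
    tsum_nonneg fun m => Real.rpow_nonneg (norm_nonneg _) _
  apply norm_le_of _ (Real.sqrt_nonneg _)
  have hsq : Real.sqrt (∑' m, ‖f (m + n)‖ ^ (2:ℝ)) ^ (2:ℝ)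
      = ∑' m, ‖f (m + n)‖ ^ (2:ℝ) := by
    have h2 : Real.sqrt (∑' m, ‖f (m + n)‖ ^ (2:ℝ)) ^ (2:ℝ)
        = Real.sqrt (∑' m, ‖f (m + n)‖ ^ (2:ℝ)) ^ (2:ℕ) := by
      rw [← Real.rpow_natCast]
      norm_num
    rw [h2, Real.sq_sqrt ht]
  rw [hsq]
  apply Summable.tsum_le_tsum _ (summable_sq _) hs
  intro m
  exact rpow_two_mono (norm_nonneg _) (coshift_pow_apply_le w hw n f m)

lemma diag_congr (d₁ d₂ : ℕ → ℂ) {C₁ C₂ : ℝ} (h₁ : ∀ k, ‖d₁ k‖ ≤ C₁)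
    (h₂ : ∀ k, ‖d₂ k‖ ≤ C₂) (h : ∀ m, d₁ m = d₂ m) : diag d₁ h₁ = diag d₂ h₂ :=
  ContinuousLinearMap.ext fun f => lp.ext (funext fun m => by
    show d₁ m * f m = d₂ m * f m
    rw [h m])

lemma diag_one {C : ℝ} (h : ∀ k : ℕ, ‖(1:ℂ)‖ ≤ C) :
    diag (fun _ => (1:ℂ)) h = 1 :=
  ContinuousLinearMap.ext fun f => lp.ext (funext fun m => one_mul (f m))

lemma coshift_diag_shift (w : ℕ → ℂ) (hw : ∀ k, ‖w k‖ ≤ 1) (d d' : ℕ → ℂ)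
    {C C' : ℝ} (hd : ∀ k, ‖d k‖ ≤ C) (hd' : ∀ k, ‖d' k‖ ≤ C')
    (h : ∀ m, d' m = w m * d (m+1) * w m) :
    coshift w hw ∘L (diag d hd ∘L shift w hw) = diag d' hd' := by
  refine ContinuousLinearMap.ext fun f => lp.ext (funext fun m => ?_)
  show w m * (d (m+1) * (w m * f m)) = d' m * f m
  rw [h m]
  ring

lemma diag_sub_norm_le (d₁ d₂ : ℕ → ℂ) {C₁ C₂ C : ℝ} (h₁ : ∀ k, ‖d₁ k‖ ≤ C₁)
    (h₂ : ∀ k, ‖d₂ k‖ ≤ C₂) (h : ∀ m, ‖d₁ m - d₂ m‖ ≤ C) :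
    ‖diag d₁ h₁ - diag d₂ h₂‖ ≤ C := by
  have hC : 0 ≤ C := le_trans (norm_nonneg _) (h 0)
  have heq : diag d₁ h₁ - diag d₂ h₂ = diag (fun m => d₁ m - d₂ m) h := by
    refine ContinuousLinearMap.ext fun f => lp.ext (funext fun m => ?_)
    show ((diag d₁ h₁ - diag d₂ h₂) f : ℕ → ℂ) m = (d₁ m - d₂ m) * f m
    rw [ContinuousLinearMap.sub_apply, lp.coeFn_sub, Pi.sub_apply, diag_apply,
      diag_apply, sub_mul]
  rw [heq]
  exact LinearMap.mkContinuous_norm_le _ hC _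

end DiagAux

open DiagAux in
/-- Let `A` be a positive diagonal contraction on a separable infinite-dimensional Hilbert
space whose eigenvalues form an increasing sequence `λ_j` with `0 < λ_j < 1` and `λ_j ↗ 1`
(listed with multiplicity). Then `A` is the uniform asymptotic limit of a contraction of
class `C_{·0}`. -/
theorem diagonal_uniform_asymptotic_limit {H : Type*} [NormedAddCommGroup H]
    [InnerProductSpace ℂ H] [CompleteSpace H] (e : HilbertBasis ℕ ℂ H)
    (lam : ℕ → ℝ) (hmono : Monotone lam) (h0 : ∀ j, 0 < lam j) (h1 : ∀ j, lam j < 1)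
    (hlim : Tendsto lam atTop (𝓝 1))
    (A : H →L[ℂ] H) (hApos : A.IsPositive) (hAcontr : ‖A‖ ≤ 1)
    (hdiag : ∀ j : ℕ, A (e j) = (lam j : ℂ) • e j) :
    ∃ T : H →L[ℂ] H, ‖T‖ ≤ 1 ∧
      (∀ x : H, Tendsto (fun n : ℕ => ‖(adjoint T ^ n) x‖) atTop (𝓝 0)) ∧
      Tendsto (fun n : ℕ => ‖adjoint (T ^ n) ∘L T ^ n - A‖) atTop (𝓝 0) := by
  classical
  -- the weights
  set w : ℕ → ℂ := fun j => ((Real.sqrt (lam j / lam (j+1)) : ℝ) : ℂ) with hw_def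
  have hdivnn : ∀ j, 0 ≤ lam j / lam (j+1) := fun j => div_nonneg (h0 j).le (h0 _).le
  have hdivle : ∀ j, lam j / lam (j+1) ≤ 1 := fun j =>
    (div_le_one (h0 (j+1))).mpr (hmono (Nat.le_succ j))
  have hw : ∀ k, ‖w k‖ ≤ 1 := by
    intro k
    rw [hw_def]
    simp only []
    rw [Complex.norm_real, Real.norm_eq_abs, abs_of_nonneg (Real.sqrt_nonneg _)]
    exact Real.sqrt_le_one.mpr (hdivle k)
  have hconj : ∀ k, (starRingEnd ℂ) (w k) = w k := fun k => Complex.conj_ofReal _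
  -- the diagonal entries
  set dd : ℕ → ℕ → ℂ := fun n j => ((lam j / lam (j+n) : ℝ) : ℂ) with hdd_def
  have hdd : ∀ n k, ‖dd n k‖ ≤ 1 := by
    intro n k
    rw [hdd_def]
    simp only []
    rw [Complex.norm_real, Real.norm_eq_abs, abs_of_nonneg (div_nonneg (h0 k).le (h0 _).le)]
    exact (div_le_one (h0 (k+n))).mpr (hmono (Nat.le_add_right k n))
  set lamC : ℕ → ℂ := fun j => ((lam j : ℝ) : ℂ) with hlamC_def
  have hlamC : ∀ k, ‖lamC k‖ ≤ 1 := by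
    intro k
    rw [hlamC_def]
    simp only []
    rw [Complex.norm_real, Real.norm_eq_abs, abs_of_nonneg (h0 k).le]
    exact (h1 k).le
  -- the unitary conjugation
  let Uf : H →L[ℂ] DiagAux.K := (e.repr.toContinuousLinearEquiv : H ≃L[ℂ] DiagAux.K)
  let Ui : DiagAux.K →L[ℂ] H := (e.repr.symm.toContinuousLinearEquiv : DiagAux.K ≃L[ℂ] H)
  have hUf : ∀ x : H, Uf x = e.repr x := fun _ => rfl
  have hUi : ∀ f : DiagAux.K, Ui f = e.repr.symm f := fun _ => rfl
  have hUfUi : ∀ f : DiagAux.K, Uf (Ui f) = f := by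
    intro f; rw [hUf, hUi]; exact e.repr.apply_symm_apply f
  have hUiUf : ∀ x : H, Ui (Uf x) = x := by
    intro x; rw [hUf, hUi]; exact e.repr.symm_apply_apply x
  have hcomp : ∀ M N : DiagAux.K →L[ℂ] DiagAux.K,
      (Ui ∘L M ∘L Uf) ∘L (Ui ∘L N ∘L Uf) = Ui ∘L (M ∘L N) ∘L Uf := by
    intro M N
    refine ContinuousLinearMap.ext fun x => ?_
    simp only [ContinuousLinearMap.comp_apply]
    rw [hUfUi]
  have hone : Ui ∘L (1 : DiagAux.K →L[ℂ] DiagAux.K) ∘L Uf = 1 := by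
    refine ContinuousLinearMap.ext fun x => ?_
    simp only [ContinuousLinearMap.comp_apply, ContinuousLinearMap.one_apply]
    exact hUiUf x
  have hconj_pow : ∀ (M : DiagAux.K →L[ℂ] DiagAux.K) (n : ℕ),
      (Ui ∘L M ∘L Uf) ^ n = Ui ∘L (M ^ n) ∘L Uf := by
    intro M n
    induction n with
    | zero => rw [pow_zero, pow_zero]; exact hone.symm
    | succ n ih =>
        rw [pow_succ, pow_succ, ih, ContinuousLinearMap.mul_def,
          ContinuousLinearMap.mul_def, hcomp]
  have hsub : ∀ M N : DiagAux.K →L[ℂ] DiagAux.K,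
      Ui ∘L M ∘L Uf - Ui ∘L N ∘L Uf = Ui ∘L (M - N) ∘L Uf := by
    intro M N
    refine ContinuousLinearMap.ext fun x => ?_
    simp only [ContinuousLinearMap.sub_apply, ContinuousLinearMap.comp_apply,
      ContinuousLinearMap.sub_apply, map_sub]
  have hnormc : ∀ M : DiagAux.K →L[ℂ] DiagAux.K, ‖Ui ∘L M ∘L Uf‖ ≤ ‖M‖ := by
    intro M
    refine ContinuousLinearMap.opNorm_le_bound _ (norm_nonneg M) fun x => ?_
    simp only [ContinuousLinearMap.comp_apply]
    rw [hUi, e.repr.symm.norm_map]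
    calc ‖M (Uf x)‖ ≤ ‖M‖ * ‖Uf x‖ := M.le_opNorm _
      _ = ‖M‖ * ‖x‖ := by rw [hUf, e.repr.norm_map]
  -- the operator
  refine ⟨Ui ∘L shift w hw ∘L Uf, ?_, ?_, ?_⟩
  · exact le_trans (hnormc _) (shift_norm_le w hw)
  · -- class C.0
    have key1 : adjoint (Ui ∘L shift w hw ∘L Uf) = Ui ∘L coshift w hw ∘L Uf := by
      refine ((ContinuousLinearMap.eq_adjoint_iff _ _).mpr fun x y => ?_).symm
      simp only [ContinuousLinearMap.comp_apply]
      have hx : (inner ℂ (Ui (coshift w hw (Uf x))) y : ℂ)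
          = inner ℂ (coshift w hw (Uf x)) (e.repr y) := by
        rw [hUi]
        conv_lhs => rw [← e.repr.symm_apply_apply y]
        exact e.repr.symm.inner_map_map _ _
      have hy : (inner ℂ x (Ui (shift w hw (Uf y))) : ℂ)
          = inner ℂ (e.repr x) (shift w hw (Uf y)) := by
        rw [hUi]
        conv_lhs => rw [← e.repr.symm_apply_apply x]
        exact e.repr.symm.inner_map_map _ _
      rw [hx, hy, ← hUf, ← hUf]
      exact inner_coshift_shift w hw hconj (Uf x) (Uf y)
    intro x
    have hb : ∀ n : ℕ, ‖(adjoint (Ui ∘L shift w hw ∘L Uf) ^ n) x‖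
        ≤ Real.sqrt (∑' m, ‖(Uf x) (m + n)‖ ^ (2:ℝ)) := by
      intro n
      rw [key1, hconj_pow]
      simp only [ContinuousLinearMap.comp_apply]
      rw [hUi, e.repr.symm.norm_map]
      exact coshift_pow_norm_le w hw n (Uf x)
    have h2 : Tendsto (fun n : ℕ => ∑' m, ‖(Uf x) (m + n)‖ ^ (2:ℝ)) atTop (𝓝 0) :=
      tendsto_sum_nat_add fun m => ‖(Uf x) m‖ ^ (2:ℝ)
    have h3 : Tendsto (fun n : ℕ => Real.sqrt (∑' m, ‖(Uf x) (m + n)‖ ^ (2:ℝ)))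
        atTop (𝓝 0) := by
      have := (Real.continuous_sqrt.tendsto 0).comp h2
      simpa [Function.comp_def] using this
    exact squeeze_zero (fun n => norm_nonneg _) hb h3
  · -- uniform asymptotic limit
    have key1 : adjoint (Ui ∘L shift w hw ∘L Uf) = Ui ∘L coshift w hw ∘L Uf := by
      refine ((ContinuousLinearMap.eq_adjoint_iff _ _).mpr fun x y => ?_).symm
      simp only [ContinuousLinearMap.comp_apply]
      have hx : (inner ℂ (Ui (coshift w hw (Uf x))) y : ℂ)
          = inner ℂ (coshift w hw (Uf x)) (e.repr y) := by
        rw [hUi]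
        conv_lhs => rw [← e.repr.symm_apply_apply y]
        exact e.repr.symm.inner_map_map _ _
      have hy : (inner ℂ x (Ui (shift w hw (Uf y))) : ℂ)
          = inner ℂ (e.repr x) (shift w hw (Uf y)) := by
        rw [hUi]
        conv_lhs => rw [← e.repr.symm_apply_apply x]
        exact e.repr.symm.inner_map_map _ _
      rw [hx, hy, ← hUf, ← hUf]
      exact inner_coshift_shift w hw hconj (Uf x) (Uf y)
    -- the product identity
    have hprod : ∀ n : ℕ, coshift w hw ^ n * shift w hw ^ n = diag (dd n) (hdd n) := by
      intro n
      induction n with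
      | zero =>
          rw [pow_zero, pow_zero, one_mul]
          refine ((diag_congr (dd 0) (fun _ => (1:ℂ)) (hdd 0) (C₂ := 1)
            (fun _ => by norm_num) fun m => ?_).trans (diag_one (C := 1)
            (fun _ => by norm_num))).symm
          show ((lam m / lam (m+0) : ℝ) : ℂ) = 1
          rw [Nat.add_zero, div_self (h0 m).ne', Complex.ofReal_one]
      | succ n ih =>
          have hstep : ∀ m, dd (n+1) m = w m * dd n (m+1) * w m := by
            intro m
            have hww : w m * w m = ((lam m / lam (m+1) : ℝ) : ℂ) := by
              rw [hw_def]
              simp only []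
              rw [← Complex.ofReal_mul, Real.mul_self_sqrt (hdivnn m)]
            have : w m * dd n (m+1) * w m
                = ((lam m / lam (m+1) : ℝ) : ℂ) * ((lam (m+1) / lam (m+1+n) : ℝ) : ℂ) := by
              rw [show w m * dd n (m+1) * w m = (w m * w m) * dd n (m+1) by ring, hww]
              try rfl
            rw [this, ← Complex.ofReal_mul]
            show ((lam m / lam (m+(n+1)) : ℝ) : ℂ) = _
            congr 1
            have hidx : m + 1 + n = m + (n+1) := by omega
            rw [hidx, div_mul_div_comm, mul_comm (lam m) (lam (m+1)),
              mul_div_mul_left _ _ (h0 (m+1)).ne']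
          calc coshift w hw ^ (n+1) * shift w hw ^ (n+1)
              = (coshift w hw * coshift w hw ^ n) * (shift w hw ^ n * shift w hw) := by
                rw [pow_succ', pow_succ]
            _ = coshift w hw * ((coshift w hw ^ n * shift w hw ^ n) * shift w hw) := by
                rw [mul_assoc, mul_assoc]
            _ = coshift w hw * (diag (dd n) (hdd n) * shift w hw) := by rw [ih]
            _ = coshift w hw ∘L (diag (dd n) (hdd n) ∘L shift w hw) := by
                rw [ContinuousLinearMap.mul_def, ContinuousLinearMap.mul_def]
            _ = diag (dd (n+1)) (hdd (n+1)) :=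
                coshift_diag_shift w hw (dd n) (dd (n+1)) (hdd n) (hdd (n+1)) hstep
    -- A is the conjugated diagonal operator
    have hAeq : A = Ui ∘L diag lamC hlamC ∘L Uf := by
      have hdense : Dense ((Submodule.span ℂ (Set.range (⇑e : ℕ → H)) : Submodule ℂ H) : Set H) :=
        Submodule.dense_iff_topologicalClosure_eq_top.mpr e.dense_span
      refine ContinuousLinearMap.ext_on hdense ?_
      rintro x ⟨j, rfl⟩
      rw [hdiag j]
      simp only [ContinuousLinearMap.comp_apply]
      rw [hUf, e.repr_self]
      have hDsingle : diag lamC hlamC (lp.single 2 j (1:ℂ)) = (lam j : ℂ) • lp.single 2 j 1 := by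
        apply lp.ext
        funext m
        rw [lp.coeFn_smul, Pi.smul_apply]
        show lamC m * (lp.single 2 j (1:ℂ) : ℕ → ℂ) m = _
        by_cases hm : m = j
        · subst hm
          rw [lp.single_apply_self]
          simp [hlamC_def, smul_eq_mul]
        · rw [lp.single_apply_ne 2 j _ hm]
          simp
      rw [hDsingle, map_smul, hUi]
      congr 1
      rw [← e.repr_self j, e.repr.symm_apply_apply]
    -- the norm bound
    have hbound : ∀ n : ℕ,
        ‖adjoint ((Ui ∘L shift w hw ∘L Uf) ^ n) ∘L (Ui ∘L shift w hw ∘L Uf) ^ n - A‖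
          ≤ 1 - lam n := by
      intro n
      have e1 : adjoint ((Ui ∘L shift w hw ∘L Uf) ^ n)
          = adjoint (Ui ∘L shift w hw ∘L Uf) ^ n := by
        rw [← ContinuousLinearMap.star_eq_adjoint, star_pow,
          ContinuousLinearMap.star_eq_adjoint]
      rw [e1, key1, hconj_pow, hconj_pow, hcomp, hAeq, ← ContinuousLinearMap.mul_def,
        hprod n, hsub]
      refine le_trans (hnormc _) (diag_sub_norm_le _ _ _ _ fun m => ?_)
      have hx : ‖dd n m - lamC m‖ = |lam m / lam (m+n) - lam m| := by
        show ‖((lam m / lam (m+n) : ℝ) : ℂ) - ((lam m : ℝ) : ℂ)‖ = _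
        rw [← Complex.ofReal_sub, Complex.norm_real, Real.norm_eq_abs]
      rw [hx]
      have hb1 : 0 < lam (m+n) := h0 _
      have hb2 : lam m ≤ lam (m+n) := hmono (Nat.le_add_right m n)
      have hb3 : lam n ≤ lam (m+n) := hmono (Nat.le_add_left n m)
      have heq2 : lam m / lam (m+n) - lam m = (lam m / lam (m+n)) * (1 - lam (m+n)) := by
        field_simp
      have hnn : 0 ≤ lam m / lam (m+n) - lam m := by
        rw [heq2]
        exact mul_nonneg (div_nonneg (h0 m).le hb1.le) (by linarith [h1 (m+n)])
      rw [abs_of_nonneg hnn, heq2]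
      calc (lam m / lam (m+n)) * (1 - lam (m+n)) ≤ 1 * (1 - lam n) := by
            apply mul_le_mul ((div_le_one hb1).mpr hb2) (by linarith)
              (by linarith [h1 (m+n)]) zero_le_one
        _ = 1 - lam n := one_mul _
    have htend : Tendsto (fun n : ℕ => 1 - lam n) atTop (𝓝 0) := by
      have := hlim.const_sub (1:ℝ)
      simpa using this
    exact squeeze_zero (fun n => norm_nonneg _) hbound htend
end
end

section
/- If T₁ and T₂ are contractions on H with equal asymptotic limits A_{T₁} = A_{T₂} = A, then A ≤ A_{T₁T₂}. If in addition T₁ and T₂ commute, then A_{T₁T₂} = A. -/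
open Filter Topology ContinuousLinearMap

section Aux

local notation "⟪" x ", " y "⟫" => @inner ℂ _ _ x y

variable {H : Type*} [NormedAddCommGroup H] [InnerProductSpace ℂ H] [CompleteSpace H]

private lemma aux_pow_norm (T : H →L[ℂ] H) (hT : ‖T‖ ≤ 1) (n : ℕ) (x : H) :
    ‖(T ^ n) x‖ ≤ ‖x‖ := by
  induction n generalizing x with
  | zero => simp
  | succ n ih =>
    rw [pow_succ]
    calc ‖(T ^ n * T) x‖ = ‖(T ^ n) (T x)‖ := rfl
    _ ≤ ‖T x‖ := ih _
    _ ≤ ‖T‖ * ‖x‖ := T.le_opNorm x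
    _ ≤ ‖x‖ := by nlinarith [norm_nonneg x]

private lemma aux_qlim (T B : H →L[ℂ] H)
    (hB : ∀ x : H, Tendsto (fun n : ℕ => (adjoint (T ^ n) ∘L T ^ n) x) atTop (𝓝 (B x)))
    (x : H) :
    Tendsto (fun n : ℕ => (‖(T ^ n) x‖ : ℝ) ^ 2) atTop (𝓝 (RCLike.re ⟪B x, x⟫)) := by
  have h1 : Tendsto (fun n : ℕ => ⟪(adjoint (T ^ n) ∘L T ^ n) x, x⟫) atTop (𝓝 ⟪B x, x⟫) :=
    (hB x).inner tendsto_const_nhds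
  have h2 : Tendsto (fun n : ℕ => RCLike.re ⟪(adjoint (T ^ n) ∘L T ^ n) x, x⟫) atTop
      (𝓝 (RCLike.re ⟪B x, x⟫)) := (RCLike.continuous_re.tendsto _).comp h1
  convert h2 using 2 with n
  rw [show (adjoint (T ^ n) ∘L T ^ n) x = adjoint (T ^ n) ((T ^ n) x) from rfl,
    adjoint_inner_left, inner_self_eq_norm_sq_to_K]
  norm_cast

private lemma aux_symm (T B : H →L[ℂ] H)
    (hB : ∀ x : H, Tendsto (fun n : ℕ => (adjoint (T ^ n) ∘L T ^ n) x) atTop (𝓝 (B x)))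
    (x y : H) : ⟪B x, y⟫ = ⟪x, B y⟫ := by
  have h1 : Tendsto (fun n : ℕ => ⟪(adjoint (T ^ n) ∘L T ^ n) x, y⟫) atTop (𝓝 ⟪B x, y⟫) :=
    (hB x).inner tendsto_const_nhds
  have h2 : Tendsto (fun n : ℕ => ⟪x, (adjoint (T ^ n) ∘L T ^ n) y⟫) atTop (𝓝 ⟪x, B y⟫) :=
    tendsto_const_nhds.inner (hB y)
  refine tendsto_nhds_unique (h1.congr fun n => ?_) h2
  rw [show (adjoint (T ^ n) ∘L T ^ n) x = adjoint (T ^ n) ((T ^ n) x) from rfl,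
    show (adjoint (T ^ n) ∘L T ^ n) y = adjoint (T ^ n) ((T ^ n) y) from rfl,
    adjoint_inner_left, adjoint_inner_right]

private lemma aux_fix (T B : H →L[ℂ] H)
    (hB : ∀ x : H, Tendsto (fun n : ℕ => (adjoint (T ^ n) ∘L T ^ n) x) atTop (𝓝 (B x)))
    (x : H) : adjoint T (B (T x)) = B x := by
  have h1 : Tendsto (fun n : ℕ => (adjoint (T ^ (n + 1)) ∘L T ^ (n + 1)) x) atTop (𝓝 (B x)) :=
    (hB x).comp (tendsto_add_atTop_nat 1)
  have h2 : Tendsto (fun n : ℕ => adjoint T ((adjoint (T ^ n) ∘L T ^ n) (T x))) atTop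
      (𝓝 (adjoint T (B (T x)))) := ((adjoint T).continuous.tendsto _).comp (hB (T x))
  refine (tendsto_nhds_unique (h1.congr fun n => ?_) h2).symm
  have ha : adjoint (T ^ (n + 1)) = adjoint T ∘L adjoint (T ^ n) := by
    rw [pow_succ, mul_def, adjoint_comp]
  rw [show (adjoint (T ^ (n + 1)) ∘L T ^ (n + 1)) x
      = adjoint (T ^ (n + 1)) ((T ^ (n + 1)) x) from rfl, ha, pow_succ]
  rfl

end Aux

/-- If `T₁, T₂` are contractions with equal asymptotic limits `A`, then `A ≤ A_{T₁T₂}`;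
if moreover `T₁` and `T₂` commute, then `A_{T₁T₂} = A`. -/
theorem asymptotic_limit_of_product_of_eq {H : Type*} [NormedAddCommGroup H]
    [InnerProductSpace ℂ H] [CompleteSpace H]
    (T₁ T₂ : H →L[ℂ] H) (hT₁ : ‖T₁‖ ≤ 1) (hT₂ : ‖T₂‖ ≤ 1)
    (A : H →L[ℂ] H)
    (hA₁ : ∀ x : H, Tendsto (fun n : ℕ => (adjoint (T₁ ^ n) ∘L T₁ ^ n) x) atTop (𝓝 (A x)))
    (hA₂ : ∀ x : H, Tendsto (fun n : ℕ => (adjoint (T₂ ^ n) ∘L T₂ ^ n) x) atTop (𝓝 (A x)))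
    (A₁₂ : H →L[ℂ] H)
    (hA₁₂ : ∀ x : H, Tendsto
      (fun n : ℕ => (adjoint ((T₁ ∘L T₂) ^ n) ∘L (T₁ ∘L T₂) ^ n) x) atTop (𝓝 (A₁₂ x))) :
    A ≤ A₁₂ ∧ (T₁ ∘L T₂ = T₂ ∘L T₁ → A₁₂ = A) := by
  set S : H →L[ℂ] H := T₁ ∘L T₂ with hS
  -- quadratic form of A is S-invariant
  have hq1 : ∀ z : H, (inner ℂ (A (T₁ z)) (T₁ z) : ℂ) = inner ℂ (A z) z := fun z => by
    rw [← adjoint_inner_left, aux_fix T₁ A hA₁]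
  have hq2 : ∀ z : H, (inner ℂ (A (T₂ z)) (T₂ z) : ℂ) = inner ℂ (A z) z := fun z => by
    rw [← adjoint_inner_left, aux_fix T₂ A hA₂]
  have hq : ∀ y : H, (inner ℂ (A (S y)) (S y) : ℂ) = inner ℂ (A y) y := fun y => by
    rw [show S y = T₁ (T₂ y) from rfl, hq1, hq2]
  have hqn : ∀ (n : ℕ) (x : H), (inner ℂ (A ((S ^ n) x)) ((S ^ n) x) : ℂ) = inner ℂ (A x) x := by
    intro n x
    induction n with
    | zero => simp
    | succ n ih =>
      rw [pow_succ', show (S * S ^ n) x = S ((S ^ n) x) from rfl, hq, ih]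
  -- bound: re ⟪A y, y⟫ ≤ ‖y‖ ^ 2
  have hbound : ∀ y : H, RCLike.re (inner ℂ (A y) y : ℂ) ≤ ‖y‖ ^ 2 := fun y =>
    le_of_tendsto (aux_qlim T₁ A hA₁ y) (Eventually.of_forall fun n =>
      pow_le_pow_left₀ (norm_nonneg _) (aux_pow_norm T₁ hT₁ n y) 2)
  -- key inequality
  have key1 : ∀ x : H, RCLike.re (inner ℂ (A x) x : ℂ) ≤ RCLike.re (inner ℂ (A₁₂ x) x : ℂ) := by
    intro x
    refine ge_of_tendsto (aux_qlim S A₁₂ hA₁₂ x) (Eventually.of_forall fun n => ?_)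
    calc RCLike.re (inner ℂ (A x) x : ℂ)
        = RCLike.re (inner ℂ (A ((S ^ n) x)) ((S ^ n) x) : ℂ) := by rw [hqn]
      _ ≤ ‖(S ^ n) x‖ ^ 2 := hbound _
  -- symmetry / real-valuedness of the difference form
  have hsd : ∀ x : H, (starRingEnd ℂ) (inner ℂ ((A₁₂ - A) x) x : ℂ) = inner ℂ ((A₁₂ - A) x) x := by
    intro x
    rw [inner_conj_symm, sub_apply, inner_sub_left, inner_sub_right,
      aux_symm S A₁₂ hA₁₂, aux_symm T₁ A hA₁]
  have hre : ∀ x : H, ((RCLike.re (inner ℂ ((A₁₂ - A) x) x : ℂ) : ℝ) : ℂ)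
      = inner ℂ ((A₁₂ - A) x) x := fun x => RCLike.conj_eq_iff_re.mp (hsd x)
  have hpos : A ≤ A₁₂ := by
    rw [ContinuousLinearMap.le_def, isPositive_iff_complex]
    intro x
    refine ⟨hre x, ?_⟩
    have : RCLike.re (inner ℂ ((A₁₂ - A) x) x : ℂ)
        = RCLike.re (inner ℂ (A₁₂ x) x : ℂ) - RCLike.re (inner ℂ (A x) x : ℂ) := by
      rw [sub_apply, inner_sub_left, map_sub]
    rw [this]
    linarith [key1 x]
  refine ⟨hpos, fun hcomm => ?_⟩
  -- commuting case
  have hc : Commute T₁ T₂ := hcomm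
  have hmul : ∀ n : ℕ, S ^ n = T₁ ^ n * T₂ ^ n := fun n => by
    rw [hS, ← mul_def, hc.mul_pow]
  have key2 : ∀ x : H, RCLike.re (inner ℂ (A₁₂ x) x : ℂ) ≤ RCLike.re (inner ℂ (A x) x : ℂ) := by
    intro x
    refine le_of_tendsto_of_tendsto' (aux_qlim S A₁₂ hA₁₂ x) (aux_qlim T₂ A hA₂ x) fun n => ?_
    have h1 : ‖(S ^ n) x‖ = ‖(T₁ ^ n) ((T₂ ^ n) x)‖ := by rw [hmul]; rfl
    have h2 : ‖(T₁ ^ n) ((T₂ ^ n) x)‖ ≤ ‖(T₂ ^ n) x‖ := aux_pow_norm T₁ hT₁ n _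
    rw [h1]
    exact pow_le_pow_left₀ (norm_nonneg _) h2 2
  have hz : ∀ x : H, (inner ℂ ((A₁₂ - A) x) x : ℂ) = 0 := by
    intro x
    rw [← hre x]
    have : RCLike.re (inner ℂ ((A₁₂ - A) x) x : ℂ) = 0 := by
      have h := key1 x
      have h' := key2 x
      rw [sub_apply, inner_sub_left, map_sub]
      linarith
    rw [this]
    norm_num
  have : ((A₁₂ - A : H →L[ℂ] H) : H →ₗ[ℂ] H) = 0 := by
    rw [← inner_map_self_eq_zero]
    intro x
    exact hz x
  have h0 : (A₁₂ - A : H →L[ℂ] H) = 0 := by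
    ext x
    have := LinearMap.congr_fun this x
    simpa using this
  rw [← sub_eq_zero]
  exact h0
end
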